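/- arXiv:2310.09973 — 5 statements merged into one kernel-verified Lean document; each statement's English description precedes it below -/
import Mathlib

section
/- Let k ≥ 2 and let G₁, …, G_k be Class 1 simple graphs, each with at least one edge, with maximum degrees Δ(G₁), …, Δ(G_k). Let G = G₁ □ G₂ □ ⋯ □ G_k be their iterated Cartesian (box) product, and let φ be a partial proper edge coloring of G defined on a set E₀ of edges of G using at most Σᵢ Δ(Gᵢ) colors, such that any two distinct edges of E₀ are at distance at least 3 in G. If Σᵢ Δ(Gᵢ) is even and 2Δ(Gᵢ) < Σⱼ Δ(Gⱼ) for every i ∈ {1, …, k}, then φ extends to a proper edge coloring of G using Σᵢ Δ(Gᵢ) colors. -/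
open SimpleGraph
open scoped Classical

/-- A (total) edge coloring `c` with `n` colors is proper on the edge set `E₀ ⊆ G.edgeSet`:
any two distinct edges of `E₀` sharing a vertex receive different colors. -/
def IsProperEdgeColoringOn {V : Type*} (G : SimpleGraph V) (E₀ : Set (Sym2 V)) {n : ℕ}
    (c : Sym2 V → Fin n) : Prop :=
  E₀ ⊆ G.edgeSet ∧
    ∀ e ∈ E₀, ∀ f ∈ E₀, e ≠ f → (∃ v, v ∈ e ∧ v ∈ f) → c e ≠ c f

/-- A proper edge coloring of `G` with `n` colors: any two distinct edges of `G`
sharing a vertex receive different colors. -/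
def IsProperEdgeColoring {V : Type*} (G : SimpleGraph V) {n : ℕ} (c : Sym2 V → Fin n) : Prop :=
  ∀ e ∈ G.edgeSet, ∀ f ∈ G.edgeSet, e ≠ f → (∃ v, v ∈ e ∧ v ∈ f) → c e ≠ c f

/-- The distance between edges `e` and `f` of `G` is at least `k`:
every endpoint of `e` is at (extended) graph distance at least `k` from every endpoint of `f`. -/
def EdgeDistGE {V : Type*} (G : SimpleGraph V) (e f : Sym2 V) (k : ℕ) : Prop :=
  ∀ x ∈ e, ∀ y ∈ f, (k : ℕ∞) ≤ G.edist x y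

/-- The chromatic index of `G`: the least `n` such that `G` admits a proper edge coloring
with `n` colors. -/
noncomputable def chromIndex {V : Type*} (G : SimpleGraph V) : ℕ :=
  sInf {n | ∃ c : Sym2 V → Fin n, IsProperEdgeColoring G c}

/-- A finite graph is Class 1 if its chromatic index equals its maximum degree. -/
def IsClassOne {V : Type*} [Fintype V] (G : SimpleGraph V) : Prop :=
  chromIndex G = G.maxDegree

/-- The iterated Cartesian (box) product of the family of graphs `G i`. -/
def boxProdPi {ι : Type*} {V : ι → Type*} (G : ∀ i, SimpleGraph (V i)) :
    SimpleGraph (∀ i, V i) where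
  Adj x y := ∃ i, (G i).Adj (x i) (y i) ∧ ∀ j, j ≠ i → x j = y j
  symm := ⟨fun x y ⟨i, ha, he⟩ => ⟨i, ha.symm, fun j hj => (he j hj).symm⟩⟩
  loopless := ⟨fun x ⟨i, ha, _⟩ => (G i).loopless.irrefl _ ha⟩

/-- The `d`-fold iterated Cartesian (box) product of `G` with itself. -/
def boxPow {V : Type*} (G : SimpleGraph V) (d : ℕ) : SimpleGraph (Fin d → V) :=
  boxProdPi fun _ => G

/-!
Color an edge of the product in direction `i` by the color of its projection under a
`Δ(Gᵢ)`-edge-coloring of `Gᵢ`, moved into the `i`-th block of the palette `Fin N`,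
`N = ∑ Δ(Gᵢ)`. For two colors of distinct blocks the two-colored components of this coloring
are squares or single edges, and the rotation `κ ↦ κ + N / 2` of the palette moves every color
to another block, since every block is shorter than `N / 2`.

A precolored edge `e = xy` whose precolor `α` differs from its color `β` is repaired by swapping
`α` and `β` on the `α`-`β` component through `e`, which is a square (or `e` alone) provided `α`
and `β` lie in distinct blocks. If they lie in the same block, one first swaps `α` with its
rotation `α + N / 2` on the squares at `x` and `y`; this is a single global involution of
colors, so these switches cannot interfere. Afterwards the `α`-edges at `x` and `y` point in a
direction other than that of `e`. Every repaired edge, and one endpoint of every shifted edge,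
lies within distance one of its precolored edge, and distance at least `3` between precolored
edges makes these neighborhoods disjoint.
-/

section Coloring

variable {V : Type*} (H : SimpleGraph V) {n : ℕ}

theorem isProperEdgeColoring_iff {c : Sym2 V → Fin n} :
    IsProperEdgeColoring H c ↔
      ∀ ⦃x w w'⦄, H.Adj x w → H.Adj x w' → c s(x, w) = c s(x, w') → w = w' := by
  constructor
  · intro hc x w w' hw hw' heq
    by_contra hne
    exact hc _ hw _ hw' (Sym2.congr_right.not.mpr hne)
      ⟨x, Sym2.mem_mk_left _ _, Sym2.mem_mk_left _ _⟩ heq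
  · rintro hc g hg h hh hne ⟨x, hxg, hxh⟩ heq
    rw [← Sym2.other_spec hxg] at hg heq hne
    rw [← Sym2.other_spec hxh] at hh heq hne
    exact hne (congrArg _ (hc hg hh heq))

/-- The other end of the edge of color `κ` at `x`, or `x` itself if there is no such edge. -/
noncomputable def colorNbr (c : Sym2 V → Fin n) (κ : Fin n) (x : V) : V :=
  if h : ∃ w, H.Adj x w ∧ c s(x, w) = κ then h.choose else x

variable {H} {c : Sym2 V → Fin n} {κ : Fin n} {x w : V}

theorem colorNbr_spec (h : ∃ w, H.Adj x w ∧ c s(x, w) = κ) :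
    H.Adj x (colorNbr H c κ x) ∧ c s(x, colorNbr H c κ x) = κ := by
  rw [colorNbr, dif_pos h]
  exact h.choose_spec

theorem colorNbr_of_not_exists (h : ¬∃ w, H.Adj x w ∧ c s(x, w) = κ) :
    colorNbr H c κ x = x :=
  dif_neg h

theorem colorNbr_eq_self_or_spec :
    colorNbr H c κ x = x ∨ H.Adj x (colorNbr H c κ x) ∧ c s(x, colorNbr H c κ x) = κ := by
  by_cases h : ∃ w, H.Adj x w ∧ c s(x, w) = κ
  · exact .inr (colorNbr_spec h)
  · exact .inl (colorNbr_of_not_exists h)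

theorem adj_colorNbr_iff_ne : H.Adj x (colorNbr H c κ x) ↔ colorNbr H c κ x ≠ x :=
  ⟨fun h => h.ne.symm, fun h => (colorNbr_eq_self_or_spec.resolve_left h).1⟩

theorem color_colorNbr (h : H.Adj x (colorNbr H c κ x)) : c s(x, colorNbr H c κ x) = κ :=
  (colorNbr_eq_self_or_spec.resolve_left h.ne').2

theorem edist_colorNbr_le_one : H.edist x (colorNbr H c κ x) ≤ 1 := by
  rcases colorNbr_eq_self_or_spec (H := H) (c := c) (κ := κ) (x := x) with h | h
  · rw [h, SimpleGraph.edist_self]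
    exact zero_le_one
  · exact (SimpleGraph.edist_eq_one_iff_adj.mpr h.1).le

theorem colorNbr_congr {c' : Sym2 V → Fin n} {κ' : Fin n}
    (h : ∀ w, H.Adj x w → (c' s(x, w) = κ' ↔ c s(x, w) = κ)) :
    colorNbr H c' κ' x = colorNbr H c κ x := by
  have hP : (fun w => H.Adj x w ∧ c' s(x, w) = κ') = fun w => H.Adj x w ∧ c s(x, w) = κ :=
    funext fun w => propext (and_congr_right (h w))
  simp only [colorNbr, hP]

variable (hc : IsProperEdgeColoring H c)
include hc

theorem IsProperEdgeColoring.colorNbr_eq (hw : H.Adj x w) (hκ : c s(x, w) = κ) :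
    colorNbr H c κ x = w :=
  (isProperEdgeColoring_iff H).mp hc (colorNbr_spec ⟨w, hw, hκ⟩).1 hw
    ((colorNbr_spec ⟨w, hw, hκ⟩).2.trans hκ.symm)

theorem IsProperEdgeColoring.colorNbr_involutive : Function.Involutive (colorNbr H c κ) := by
  intro x
  rcases colorNbr_eq_self_or_spec (H := H) (c := c) (κ := κ) (x := x) with h | ⟨hadj, hκ⟩
  · rw [h, h]
  · exact hc.colorNbr_eq hadj.symm (by rw [Sym2.eq_swap, hκ])

end Coloring

section KempeSwitch

variable {V : Type*} (H : SimpleGraph V) {n : ℕ} (c : Sym2 V → Fin n)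

def kempeEdges (Q : Set V) (K : Set (Fin n)) : Set (Sym2 V) :=
  {g | ∃ v ∈ Q, ∃ w, H.Adj v w ∧ c s(v, w) ∈ K ∧ g = s(v, w)}

variable {I : Type*} (Q : I → Set V) (K : I → Set (Fin n)) (τ : I → Equiv.Perm (Fin n))

noncomputable def kempeSwitch (g : Sym2 V) : Fin n :=
  if h : ∃ i, g ∈ kempeEdges H c (Q i) (K i) then τ h.choose (c g) else c g

variable {H c Q K τ}

theorem color_mem_of_mem_kempeEdges {Q : Set V} {K : Set (Fin n)} {g : Sym2 V}
    (hg : g ∈ kempeEdges H c Q K) : c g ∈ K := by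
  obtain ⟨v, -, w, -, hK, rfl⟩ := hg
  exact hK

theorem mem_of_mem_kempeEdges (hc : IsProperEdgeColoring H c) {Q : Set V} {K : Set (Fin n)}
    (hQ : ∀ v ∈ Q, ∀ κ ∈ K, colorNbr H c κ v ∈ Q) {g : Sym2 V}
    (hg : g ∈ kempeEdges H c Q K) {u : V} (hu : u ∈ g) : u ∈ Q := by
  obtain ⟨v, hv, w, hvw, hK, rfl⟩ := hg
  rcases Sym2.mem_iff.mp hu with rfl | rfl
  · exact hv
  · simpa only [hc.colorNbr_eq hvw rfl] using hQ v hv _ hK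

theorem kempeSwitch_of_not_mem {g : Sym2 V} (hg : ∀ i, g ∉ kempeEdges H c (Q i) (K i)) :
    kempeSwitch H c Q K τ g = c g :=
  dif_neg fun ⟨i, hi⟩ => hg i hi

variable (hc : IsProperEdgeColoring H c)
  (hQ : ∀ i, ∀ v ∈ Q i, ∀ κ ∈ K i, colorNbr H c κ v ∈ Q i)
  (hτ : ∀ i j, ∀ v ∈ Q i, v ∈ Q j → τ i = τ j)
include hc hQ hτ

theorem kempeSwitch_of_mem {i : I} {g : Sym2 V} (hg : g ∈ kempeEdges H c (Q i) (K i)) :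
    kempeSwitch H c Q K τ g = τ i (c g) := by
  have h : ∃ j, g ∈ kempeEdges H c (Q j) (K j) := ⟨i, hg⟩
  rw [kempeSwitch, dif_pos h]
  obtain ⟨v, hv, w, -, -, rfl⟩ := hg
  rw [hτ _ i v (mem_of_mem_kempeEdges hc (hQ _) h.choose_spec (Sym2.mem_mk_left v w)) hv]

theorem isProperEdgeColoring_kempeSwitch (hK : ∀ i, ∀ κ ∈ K i, τ i κ ∈ K i) :
    IsProperEdgeColoring H (kempeSwitch H c Q K τ) := by
  have hmixed : ∀ ⦃x w w' i⦄, H.Adj x w' → s(x, w) ∈ kempeEdges H c (Q i) (K i) →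
      (∀ j, s(x, w') ∉ kempeEdges H c (Q j) (K j)) →
      kempeSwitch H c Q K τ s(x, w) ≠ kempeSwitch H c Q K τ s(x, w') := by
    intro x w w' i hw' hg hh heq
    rw [kempeSwitch_of_mem hc hQ hτ hg, kempeSwitch_of_not_mem hh] at heq
    refine hh i ⟨x, mem_of_mem_kempeEdges hc (hQ i) hg (Sym2.mem_mk_left x w), w', hw', ?_, rfl⟩
    exact heq ▸ hK i _ (color_mem_of_mem_kempeEdges hg)
  refine (isProperEdgeColoring_iff H).mpr fun x w w' hw hw' heq => ?_
  by_cases hg : ∃ i, s(x, w) ∈ kempeEdges H c (Q i) (K i) <;>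
    by_cases hh : ∃ j, s(x, w') ∈ kempeEdges H c (Q j) (K j)
  · obtain ⟨i, hi⟩ := hg
    obtain ⟨j, hj⟩ := hh
    have hij : τ i = τ j := hτ i j x (mem_of_mem_kempeEdges hc (hQ i) hi (Sym2.mem_mk_left x w))
      (mem_of_mem_kempeEdges hc (hQ j) hj (Sym2.mem_mk_left x w'))
    rw [kempeSwitch_of_mem hc hQ hτ hi, kempeSwitch_of_mem hc hQ hτ hj, hij,
      EmbeddingLike.apply_eq_iff_eq] at heq
    exact (isProperEdgeColoring_iff H).mp hc hw hw' heq
  · exact absurd heq (hmixed hw' hg.choose_spec (not_exists.mp hh))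
  · exact absurd heq.symm (hmixed hw hh.choose_spec (not_exists.mp hg))
  · rw [kempeSwitch_of_not_mem (not_exists.mp hg), kempeSwitch_of_not_mem (not_exists.mp hh)]
      at heq
    exact (isProperEdgeColoring_iff H).mp hc hw hw' heq

end KempeSwitch

section EdgeNbhd

variable {V : Type*} {H : SimpleGraph V} {e f : Sym2 V} {z w : V}

variable (H) in
def edgeNbhd (e : Sym2 V) : Set V :=
  {v | ∃ z ∈ e, H.edist z v ≤ 1}

theorem mem_edgeNbhd_of_mem (hz : z ∈ e) : z ∈ edgeNbhd H e :=
  ⟨z, hz, by simp⟩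

theorem mem_edgeNbhd_of_adj (hz : z ∈ e) (hw : H.Adj z w) : w ∈ edgeNbhd H e :=
  ⟨z, hz, (SimpleGraph.edist_eq_one_iff_adj.mpr hw).le⟩

theorem colorNbr_mem_edgeNbhd {n : ℕ} {c : Sym2 V → Fin n} {κ : Fin n} (hz : z ∈ e) :
    colorNbr H c κ z ∈ edgeNbhd H e :=
  ⟨z, hz, edist_colorNbr_le_one⟩

theorem EdgeDistGE.disjoint_edgeNbhd (h : EdgeDistGE H e f 3) :
    Disjoint (edgeNbhd H e) (edgeNbhd H f) := by
  refine Set.disjoint_left.mpr fun v ⟨z, hz, hzv⟩ ⟨z', hz', hz'v⟩ => ?_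
  have h3 : (3 : ℕ∞) ≤ 1 + 1 :=
    calc (3 : ℕ∞) ≤ H.edist z z' := h z hz z' hz'
      _ ≤ H.edist z v + H.edist v z' := SimpleGraph.edist_triangle
      _ ≤ 1 + 1 := add_le_add hzv (SimpleGraph.edist_comm ▸ hz'v)
  norm_num at h3

end EdgeNbhd

/-- The model is the product coloring of a box product, with the coordinate directions as
blocks: commutation of `colorNbr` for colors of distinct blocks says that their two-colored
components are squares. -/
structure BlockColoring {V : Type*} (H : SimpleGraph V) (n : ℕ) (ι : Type*) where
  color : Sym2 V → Fin n
  block : Fin n → ι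
  shift : Fin n → Fin n
  isProperEdgeColoring : IsProperEdgeColoring H color
  commute_colorNbr :
    ∀ κ μ, block κ ≠ block μ →
      Function.Commute (colorNbr H color κ) (colorNbr H color μ)
  shift_involutive : Function.Involutive shift
  block_shift_ne : ∀ κ, block (shift κ) ≠ block κ

namespace BlockColoring

variable {V ι : Type*} {H : SimpleGraph V} {n : ℕ} (C : BlockColoring H n ι)
  (E₀ : Set (Sym2 V)) (φ : Sym2 V → Fin n)

local notation "ν" => colorNbr H C.color

def IsDefect (e : Sym2 V) : Prop :=
  e ∈ E₀ ∧ φ e ≠ C.color e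

def SameBlock (e : Sym2 V) : Prop :=
  C.block (φ e) = C.block (C.color e)

def shiftCore (e : Sym2 V) : Set V :=
  {v | C.IsDefect E₀ φ e ∧ C.SameBlock φ e ∧ ∃ z ∈ e, v = z ∨ v = ν (φ e) z ∨
    v = ν (C.shift (φ e)) z ∨ v = ν (φ e) (ν (C.shift (φ e)) z)}

def shiftPalette (e : Sym2 V) : Set (Fin n) :=
  {φ e, C.shift (φ e)}

noncomputable def shifted : Sym2 V → Fin n :=
  kempeSwitch H C.color (C.shiftCore E₀ φ) (C.shiftPalette φ)
    fun _ => C.shift_involutive.toPerm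

/-- In `C.shifted E₀ φ`, the edges of color `φ e` at the endpoints of a defect `e` are the edges
of color `C.target φ e` in `C.color`, and that color lies outside the block of `C.color e`. -/
noncomputable def target (e : Sym2 V) : Fin n :=
  if C.SameBlock φ e then C.shift (φ e) else φ e

def repairCore (e : Sym2 V) : Set V :=
  {v | C.IsDefect E₀ φ e ∧ ∃ z ∈ e, v = z ∨ v = ν (C.target φ e) z}

def repairPalette (e : Sym2 V) : Set (Fin n) :=
  {φ e, C.color e}

noncomputable def repaired : Sym2 V → Fin n :=
  kempeSwitch H (C.shifted E₀ φ) (C.repairCore E₀ φ) (C.repairPalette φ)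
    fun e => Equiv.swap (φ e) (C.color e)

variable {E₀ φ}

theorem colorNbr_colorNbr (κ : Fin n) (v : V) : ν κ (ν κ v) = v :=
  C.isProperEdgeColoring.colorNbr_involutive v

theorem block_target_ne (e : Sym2 V) : C.block (C.target φ e) ≠ C.block (C.color e) := by
  unfold target
  split_ifs with hsame
  · rw [← hsame]
    exact C.block_shift_ne _
  · exact hsame

theorem shiftCore_closed (e : Sym2 V) :
    ∀ v ∈ C.shiftCore E₀ φ e, ∀ κ ∈ C.shiftPalette φ e,
      ν κ v ∈ C.shiftCore E₀ φ e := by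
  rintro v ⟨hdef, hsame, z, hz, hv⟩ κ hκ
  refine ⟨hdef, hsame, z, hz, ?_⟩
  have hcomm := C.commute_colorNbr _ _ (C.block_shift_ne (φ e)).symm
  rcases hκ with rfl | rfl <;> rcases hv with rfl | rfl | rfl | rfl <;>
    simp [colorNbr_colorNbr, hcomm _]

theorem isProperEdgeColoring_shifted : IsProperEdgeColoring H (C.shifted E₀ φ) := by
  refine isProperEdgeColoring_kempeSwitch C.isProperEdgeColoring C.shiftCore_closed
    (fun _ _ _ _ _ => rfl) ?_
  rintro e κ (rfl | rfl)
  · exact .inr rfl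
  · exact .inl (C.shift_involutive _)

theorem exists_mem_edgeNbhd_of_mem_kempeEdges {f g : Sym2 V}
    (hg : g ∈ kempeEdges H C.color (C.shiftCore E₀ φ f) (C.shiftPalette φ f)) :
    ∃ u ∈ g, u ∈ edgeNbhd H f := by
  obtain ⟨v, ⟨-, -, z, hz, hv⟩, w, hvw, hκ, rfl⟩ := hg
  have hcomm := C.commute_colorNbr _ _ (C.block_shift_ne (φ f)).symm
  have hw : w = ν (C.color s(v, w)) v := (C.isProperEdgeColoring.colorNbr_eq hvw rfl).symm
  rcases hv with rfl | rfl | rfl | rfl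
  · exact ⟨_, Sym2.mem_mk_left _ _, mem_edgeNbhd_of_mem hz⟩
  · exact ⟨_, Sym2.mem_mk_left _ _, colorNbr_mem_edgeNbhd hz⟩
  · exact ⟨_, Sym2.mem_mk_left _ _, colorNbr_mem_edgeNbhd hz⟩
  · refine ⟨w, Sym2.mem_mk_right _ _, ?_⟩
    rcases hκ with hκ | hκ <;> rw [hw, hκ]
    · rw [colorNbr_colorNbr]
      exact colorNbr_mem_edgeNbhd hz
    · rw [← hcomm, colorNbr_colorNbr]
      exact colorNbr_mem_edgeNbhd hz

theorem repairCore_subset_edgeNbhd (e : Sym2 V) : C.repairCore E₀ φ e ⊆ edgeNbhd H e := by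
  rintro v ⟨-, z, hz, rfl | rfl⟩
  exacts [mem_edgeNbhd_of_mem hz, colorNbr_mem_edgeNbhd hz]

variable (hsep : E₀.PairwiseDisjoint (edgeNbhd H))
include hsep

theorem eq_of_mem_kempeEdges_shiftCore {e f g : Sym2 V} (he : e ∈ E₀)
    (hg : g ∈ kempeEdges H C.color (C.shiftCore E₀ φ f) (C.shiftPalette φ f))
    (hge : ∀ u ∈ g, u ∈ edgeNbhd H e) : f = e := by
  obtain ⟨u, hu, huf⟩ := C.exists_mem_edgeNbhd_of_mem_kempeEdges hg
  obtain ⟨v, ⟨⟨hf, -⟩, -⟩, -⟩ := hg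
  exact hsep.elim_set hf he u huf (hge u hu)

theorem shifted_eq_iff {e : Sym2 V} (he : C.IsDefect E₀ φ e) {z w : V} (hz : z ∈ e)
    (hw : H.Adj z w) : C.shifted E₀ φ s(z, w) = φ e ↔ C.color s(z, w) = C.target φ e := by
  have hnear : ∀ u ∈ s(z, w), u ∈ edgeNbhd H e := by
    intro u hu
    rcases Sym2.mem_iff.mp hu with rfl | rfl
    exacts [mem_edgeNbhd_of_mem hz, mem_edgeNbhd_of_adj hz hw]
  by_cases hg :
      ∃ f, s(z, w) ∈ kempeEdges H C.color (C.shiftCore E₀ φ f) (C.shiftPalette φ f)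
  · obtain ⟨f, hf⟩ := hg
    obtain rfl := C.eq_of_mem_kempeEdges_shiftCore hsep he.1 hf hnear
    have hsame : C.SameBlock φ f := by
      obtain ⟨-, ⟨-, hsame, -⟩, -⟩ := hf
      exact hsame
    rw [shifted, kempeSwitch_of_mem C.isProperEdgeColoring C.shiftCore_closed
      (fun _ _ _ _ _ => rfl) hf, target, if_pos hsame, Function.Involutive.coe_toPerm]
    exact C.shift_involutive.eq_iff
  · rw [shifted, kempeSwitch_of_not_mem (not_exists.mp hg), target]
    split_ifs with hsame
    · have hz' : z ∈ C.shiftCore E₀ φ e := ⟨he, hsame, z, hz, .inl rfl⟩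
      constructor <;> intro h <;>
        exact absurd ⟨e, z, hz', w, hw, by simp [shiftPalette, h], rfl⟩ hg
    · rfl

theorem shifted_eq_color {e g : Sym2 V} (he : C.IsDefect E₀ φ e)
    (hge : ∀ u ∈ g, u ∈ edgeNbhd H e) (hg : C.color g = C.color e) :
    C.shifted E₀ φ g = C.color e := by
  rw [shifted, kempeSwitch_of_not_mem, hg]
  intro f hf
  obtain rfl := C.eq_of_mem_kempeEdges_shiftCore hsep he.1 hf hge
  have hsame : C.SameBlock φ f := by
    obtain ⟨-, ⟨-, hsame, -⟩, -⟩ := hf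
    exact hsame
  rcases color_mem_of_mem_kempeEdges hf with h | h
  · exact he.2 (h.symm.trans hg)
  · exact C.block_shift_ne _ (by rw [← h, hg, hsame])

theorem colorNbr_shifted_precolor {e : Sym2 V} (he : C.IsDefect E₀ φ e) {z : V} (hz : z ∈ e) :
    colorNbr H (C.shifted E₀ φ) (φ e) z = ν (C.target φ e) z :=
  colorNbr_congr fun _ hw => C.shifted_eq_iff hsep he hz hw

theorem swap_eq_of_mem_repairCore {e f : Sym2 V} {v : V} (hve : v ∈ C.repairCore E₀ φ e)
    (hvf : v ∈ C.repairCore E₀ φ f) :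
    Equiv.swap (φ e) (C.color e) = Equiv.swap (φ f) (C.color f) := by
  rw [hsep.elim_set hve.1.1 hvf.1.1 v (C.repairCore_subset_edgeNbhd e hve)
    (C.repairCore_subset_edgeNbhd f hvf)]

variable (hE₀ : E₀ ⊆ H.edgeSet)
include hE₀

theorem colorNbr_shifted_color {x y : V} (he : C.IsDefect E₀ φ s(x, y)) :
    colorNbr H (C.shifted E₀ φ) (C.color s(x, y)) x = y :=
  C.isProperEdgeColoring_shifted.colorNbr_eq (hE₀ he.1)
    (C.shifted_eq_color hsep he (fun _ hu => mem_edgeNbhd_of_mem hu) rfl)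

theorem colorNbr_shifted_color_target {x y : V} (he : C.IsDefect E₀ φ s(x, y)) :
    colorNbr H (C.shifted E₀ φ) (C.color s(x, y)) (ν (C.target φ s(x, y)) x) =
      ν (C.target φ s(x, y)) y := by
  set δ := C.target φ s(x, y)
  set β := C.color s(x, y)
  have hxy : H.Adj x y := hE₀ he.1
  have hY : ν δ y = ν β (ν δ x) := by
    rw [← C.isProperEdgeColoring.colorNbr_eq hxy rfl,
      C.commute_colorNbr _ _ (C.block_target_ne _)]
  have hadj : H.Adj (ν δ x) (ν δ y) := by
    rw [hY, adj_colorNbr_iff_ne, ← hY]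
    exact fun h => hxy.ne (C.isProperEdgeColoring.colorNbr_involutive.injective h).symm
  refine C.isProperEdgeColoring_shifted.colorNbr_eq hadj (C.shifted_eq_color hsep he ?_ ?_)
  · intro u hu
    rcases Sym2.mem_iff.mp hu with rfl | rfl
    exacts [colorNbr_mem_edgeNbhd (Sym2.mem_mk_left x y),
      colorNbr_mem_edgeNbhd (Sym2.mem_mk_right x y)]
  · rw [hY] at hadj ⊢
    exact color_colorNbr hadj

theorem repairCore_closed (e : Sym2 V) :
    ∀ v ∈ C.repairCore E₀ φ e, ∀ κ ∈ C.repairPalette φ e,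
      colorNbr H (C.shifted E₀ φ) κ v ∈ C.repairCore E₀ φ e := by
  rintro v ⟨he, z, hz, hv⟩ κ hκ
  obtain ⟨z', rfl⟩ : ∃ z', s(z, z') = e := ⟨_, Sym2.other_spec hz⟩
  have hα := C.colorNbr_shifted_precolor hsep he (Sym2.mem_mk_left z z')
  refine ⟨he, ?_⟩
  rcases hκ with rfl | rfl <;> rcases hv with rfl | rfl
  · exact ⟨v, Sym2.mem_mk_left _ _, .inr hα⟩
  · refine ⟨z, Sym2.mem_mk_left _ _, .inl ?_⟩
    rw [← hα, C.isProperEdgeColoring_shifted.colorNbr_involutive]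
  · exact ⟨z', Sym2.mem_mk_right _ _, .inl (C.colorNbr_shifted_color hsep hE₀ he)⟩
  · exact ⟨z', Sym2.mem_mk_right _ _, .inr (C.colorNbr_shifted_color_target hsep hE₀ he)⟩

theorem isProperEdgeColoring_repaired : IsProperEdgeColoring H (C.repaired E₀ φ) := by
  refine isProperEdgeColoring_kempeSwitch C.isProperEdgeColoring_shifted
    (C.repairCore_closed hsep hE₀) (fun _ _ _ => C.swap_eq_of_mem_repairCore hsep) ?_
  rintro e κ (rfl | rfl)
  · exact .inr (Equiv.swap_apply_left _ _)
  · exact .inl (Equiv.swap_apply_right _ _)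

theorem repaired_eq {e : Sym2 V} (he : e ∈ E₀) : C.repaired E₀ φ e = φ e := by
  by_cases hgood : φ e = C.color e
  · have hshifted : C.shifted E₀ φ e = C.color e := by
      refine kempeSwitch_of_not_mem fun f hf => ?_
      obtain rfl := C.eq_of_mem_kempeEdges_shiftCore hsep he hf fun _ hu => mem_edgeNbhd_of_mem hu
      obtain ⟨_, ⟨⟨-, hbad⟩, -⟩, -⟩ := hf
      exact hbad hgood
    refine (kempeSwitch_of_not_mem fun f ⟨v, hv, w, _, _, hvw⟩ => ?_).trans
      (hshifted.trans hgood.symm)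
    obtain rfl := hsep.elim_set hv.1.1 he v (C.repairCore_subset_edgeNbhd f hv)
      (mem_edgeNbhd_of_mem (hvw ▸ Sym2.mem_mk_left v w))
    exact hv.1.2 hgood
  · obtain ⟨x, y, rfl⟩ : ∃ x y, s(x, y) = e := Sym2.ind (fun x y => ⟨x, y, rfl⟩) e
    have hdef : C.IsDefect E₀ φ s(x, y) := ⟨he, hgood⟩
    have hshifted : C.shifted E₀ φ s(x, y) = C.color s(x, y) :=
      C.shifted_eq_color hsep hdef (fun _ hu => mem_edgeNbhd_of_mem hu) rfl
    have hmem : s(x, y) ∈ kempeEdges H (C.shifted E₀ φ) (C.repairCore E₀ φ s(x, y))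
        (C.repairPalette φ s(x, y)) :=
      ⟨x, ⟨hdef, x, Sym2.mem_mk_left x y, .inl rfl⟩, y, hE₀ he,
        hshifted ▸ .inr rfl, rfl⟩
    rw [repaired, kempeSwitch_of_mem C.isProperEdgeColoring_shifted
      (C.repairCore_closed hsep hE₀) (fun _ _ _ => C.swap_eq_of_mem_repairCore hsep) hmem,
      hshifted, Equiv.swap_apply_right]

end BlockColoring

theorem BlockColoring.exists_extension {V ι : Type*} {H : SimpleGraph V} {n : ℕ}
    (C : BlockColoring H n ι) {E₀ : Set (Sym2 V)} (φ : Sym2 V → Fin n)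
    (hE₀ : E₀ ⊆ H.edgeSet) (hsep : E₀.PairwiseDisjoint (edgeNbhd H)) :
    ∃ c : Sym2 V → Fin n, IsProperEdgeColoring H c ∧ ∀ e ∈ E₀, c e = φ e :=
  ⟨C.repaired E₀ φ, C.isProperEdgeColoring_repaired hsep hE₀,
    fun _ => C.repaired_eq hsep hE₀⟩

theorem IsClassOne.exists_isProperEdgeColoring {W : Type*} [Fintype W] {G : SimpleGraph W}
    (h : IsClassOne G) : ∃ c : Sym2 W → Fin G.maxDegree, IsProperEdgeColoring G c := by
  have hne : {n | ∃ c : Sym2 W → Fin n, IsProperEdgeColoring G c}.Nonempty :=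
    ⟨_, Fintype.equivFin (Sym2 W),
      fun _ _ _ _ hne _ heq => hne ((Fintype.equivFin _).injective heq)⟩
  have hmem := Nat.sInf_mem hne
  rwa [← chromIndex, h] at hmem

section HalfTurn

def halfTurn (N : ℕ) (κ : Fin N) : Fin N :=
  if h : (κ : ℕ) < N / 2 then ⟨κ + N / 2, by omega⟩ else ⟨κ - N / 2, by omega⟩

theorem halfTurn_val (N : ℕ) (κ : Fin N) :
    (halfTurn N κ : ℕ) = if (κ : ℕ) < N / 2 then κ + N / 2 else κ - N / 2 := by
  unfold halfTurn
  split_ifs <;> rfl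

theorem halfTurn_involutive {N : ℕ} (hN : Even N) : Function.Involutive (halfTurn N) := by
  intro κ
  have h₁ := halfTurn_val N κ
  have h₂ := halfTurn_val N (halfTurn N κ)
  obtain ⟨m, rfl⟩ := hN
  ext
  split_ifs at h₁ h₂ <;> omega

theorem block_halfTurn_ne {k : ℕ} {d : Fin k → ℕ} (heven : Even (∑ i, d i))
    (hd : ∀ i, 2 * d i < ∑ j, d j) (κ : Fin (∑ i, d i)) :
    (finSigmaFinEquiv.symm (halfTurn _ κ)).1 ≠ (finSigmaFinEquiv.symm κ).1 := by
  obtain ⟨⟨i, t⟩, rfl⟩ := finSigmaFinEquiv.surjective κ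
  obtain ⟨⟨j, u⟩, hu⟩ :=
    finSigmaFinEquiv.surjective (halfTurn _ (finSigmaFinEquiv ⟨i, t⟩))
  rw [← hu, Equiv.symm_apply_apply, Equiv.symm_apply_apply]
  intro hji
  dsimp only at hji
  subst hji
  have ht := finSigmaFinEquiv_apply (n := d) ⟨j, t⟩
  have hu' := finSigmaFinEquiv_apply (n := d) ⟨j, u⟩
  have h := halfTurn_val _ (finSigmaFinEquiv ⟨j, t⟩)
  rw [← hu] at h
  dsimp only at ht hu'
  obtain ⟨m, hm⟩ := heven
  have := hd j
  have := t.2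
  have := u.2
  split_ifs at h <;> omega

end HalfTurn

section BoxProduct

theorem boxProdPi_adj_iff {ι : Type*} [DecidableEq ι] {V : ι → Type*}
    (G : ∀ i, SimpleGraph (V i)) {x y : ∀ i, V i} :
    (boxProdPi G).Adj x y ↔ ∃ i w, (G i).Adj (x i) w ∧ y = Function.update x i w := by
  constructor
  · rintro ⟨i, hi, hoff⟩
    refine ⟨i, y i, hi, funext fun j => ?_⟩
    by_cases hj : j = i
    · subst hj
      simp
    · rw [Function.update_of_ne hj, hoff j hj]
  · rintro ⟨i, w, hw, rfl⟩
    exact ⟨i, by simpa using hw, fun j hj => by simp [hj]⟩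

variable {k : ℕ} {V : Fin k → Type*} (G : ∀ i, SimpleGraph (V i)) {d : Fin k → ℕ}
  (col : ∀ i, Sym2 (V i) → Fin (d i)) (κ₀ : Fin (∑ i, d i))

/-- `κ₀` is a junk value for non-adjacent pairs. -/
noncomputable def boxProdPiColorOf (x y : ∀ i, V i) : Fin (∑ i, d i) :=
  if h : (boxProdPi G).Adj x y then
    finSigmaFinEquiv ⟨h.choose, col _ s(x h.choose, y h.choose)⟩
  else κ₀

theorem boxProdPiColorOf_eq {x y : ∀ i, V i} {i : Fin k} (hi : (G i).Adj (x i) (y i))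
    (hoff : ∀ j, j ≠ i → x j = y j) :
    boxProdPiColorOf G col κ₀ x y = finSigmaFinEquiv ⟨i, col i s(x i, y i)⟩ := by
  have h : (boxProdPi G).Adj x y := ⟨i, hi, hoff⟩
  rw [boxProdPiColorOf, dif_pos h]
  obtain rfl : h.choose = i := by
    by_contra hne
    exact h.choose_spec.1.ne (hoff _ hne)
  rfl

theorem boxProdPiColorOf_comm (x y : ∀ i, V i) :
    boxProdPiColorOf G col κ₀ x y = boxProdPiColorOf G col κ₀ y x := by
  by_cases h : (boxProdPi G).Adj x y
  · obtain ⟨i, hi, hoff⟩ := h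
    rw [boxProdPiColorOf_eq G col κ₀ hi hoff,
      boxProdPiColorOf_eq G col κ₀ hi.symm fun j hj => (hoff j hj).symm, Sym2.eq_swap]
  · rw [boxProdPiColorOf, boxProdPiColorOf, dif_neg h, dif_neg fun h' => h h'.symm]

noncomputable def boxProdPiColoring : Sym2 (∀ i, V i) → Fin (∑ i, d i) :=
  Sym2.lift ⟨boxProdPiColorOf G col κ₀, boxProdPiColorOf_comm G col κ₀⟩

theorem boxProdPiColoring_update {x : ∀ i, V i} {i : Fin k} {w : V i}
    (hw : (G i).Adj (x i) w) :
    boxProdPiColoring G col κ₀ s(x, Function.update x i w) =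
      finSigmaFinEquiv ⟨i, col i s(x i, w)⟩ := by
  rw [boxProdPiColoring, Sym2.lift_mk, Subtype.coe_mk,
    boxProdPiColorOf_eq G col κ₀ (i := i) (by simpa using hw) fun j hj => by simp [hj],
    Function.update_self]

variable {G col} (hcol : ∀ i, IsProperEdgeColoring (G i) (col i))
include hcol

theorem isProperEdgeColoring_boxProdPiColoring :
    IsProperEdgeColoring (boxProdPi G) (boxProdPiColoring G col κ₀) := by
  refine (isProperEdgeColoring_iff _).mpr fun x y y' hy hy' heq => ?_
  obtain ⟨i, w, hw, rfl⟩ := (boxProdPi_adj_iff G).mp hy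
  obtain ⟨j, w', hw', rfl⟩ := (boxProdPi_adj_iff G).mp hy'
  rw [boxProdPiColoring_update G col κ₀ hw, boxProdPiColoring_update G col κ₀ hw'] at heq
  obtain ⟨rfl, hij⟩ := Sigma.mk.inj_iff.mp (finSigmaFinEquiv.injective heq)
  rw [(isProperEdgeColoring_iff _).mp (hcol i) hw hw' (eq_of_heq hij)]

theorem colorNbr_boxProdPiColoring (i : Fin k) (t : Fin (d i)) (x : ∀ i, V i) :
    colorNbr (boxProdPi G) (boxProdPiColoring G col κ₀) (finSigmaFinEquiv ⟨i, t⟩) x =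
      Function.update x i (colorNbr (G i) (col i) t (x i)) := by
  rcases colorNbr_eq_self_or_spec (H := G i) (c := col i) (κ := t) (x := x i) with
    h | ⟨hadj, hcolor⟩
  · rw [h, Function.update_eq_self]
    refine colorNbr_of_not_exists ?_
    rintro ⟨y, hy, hcy⟩
    obtain ⟨j, w, hw, rfl⟩ := (boxProdPi_adj_iff G).mp hy
    rw [boxProdPiColoring_update G col κ₀ hw] at hcy
    obtain ⟨rfl, ht⟩ := Sigma.mk.inj_iff.mp (finSigmaFinEquiv.injective hcy)
    exact hw.ne (h.symm.trans ((hcol j).colorNbr_eq hw (eq_of_heq ht)))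
  · refine (isProperEdgeColoring_boxProdPiColoring κ₀ hcol).colorNbr_eq
      ((boxProdPi_adj_iff G).mpr ⟨i, _, hadj, rfl⟩) ?_
    rw [boxProdPiColoring_update G col κ₀ hadj, hcolor]

theorem commute_colorNbr_boxProdPiColoring {κ μ : Fin (∑ i, d i)}
    (h : (finSigmaFinEquiv.symm κ).1 ≠ (finSigmaFinEquiv.symm μ).1) :
    Function.Commute (colorNbr (boxProdPi G) (boxProdPiColoring G col κ₀) κ)
      (colorNbr (boxProdPi G) (boxProdPiColoring G col κ₀) μ) := by
  intro x
  obtain ⟨⟨i, t⟩, rfl⟩ := finSigmaFinEquiv.surjective κ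
  obtain ⟨⟨j, u⟩, rfl⟩ := finSigmaFinEquiv.surjective μ
  simp only [Equiv.symm_apply_apply] at h
  simp only [colorNbr_boxProdPiColoring κ₀ hcol, Function.update_of_ne h,
    Function.update_of_ne (Ne.symm h)]
  exact (Function.update_comm h _ _ _).symm

noncomputable def boxProdPiBlockColoring (heven : Even (∑ i, d i))
    (hd : ∀ i, 2 * d i < ∑ j, d j) : BlockColoring (boxProdPi G) (∑ i, d i) (Fin k) where
  color := boxProdPiColoring G col κ₀
  block κ := (finSigmaFinEquiv.symm κ).1
  shift := halfTurn _
  isProperEdgeColoring := isProperEdgeColoring_boxProdPiColoring κ₀ hcol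
  commute_colorNbr _ _ := commute_colorNbr_boxProdPiColoring κ₀ hcol
  shift_involutive := halfTurn_involutive heven
  block_shift_ne := block_halfTurn_ne heven hd

end BoxProduct

theorem extend_distance3_boxProdPi_general {k : ℕ} (hk : 2 ≤ k) {V : Fin k → Type*}
    [∀ i, Fintype (V i)] (G : ∀ i, SimpleGraph (V i))
    (hclass : ∀ i, IsClassOne (G i))
    (heven : Even (∑ i, (G i).maxDegree))
    (hdeg : ∀ i, 2 * (G i).maxDegree < ∑ j, (G j).maxDegree)
    (E₀ : Set (Sym2 (∀ i, V i)))
    (φ : Sym2 (∀ i, V i) → Fin (∑ i, (G i).maxDegree))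
    (hφ : IsProperEdgeColoringOn (boxProdPi G) E₀ φ)
    (hdist : ∀ e ∈ E₀, ∀ f ∈ E₀, e ≠ f → EdgeDistGE (boxProdPi G) e f 3) :
    ∃ c : Sym2 (∀ i, V i) → Fin (∑ i, (G i).maxDegree),
      IsProperEdgeColoring (boxProdPi G) c ∧ ∀ e ∈ E₀, c e = φ e := by
  choose col hcol using fun i => (hclass i).exists_isProperEdgeColoring
  have hpos : 0 < ∑ i, (G i).maxDegree := (Nat.zero_le _).trans_lt (hdeg ⟨0, by omega⟩)
  exact (boxProdPiBlockColoring ⟨0, hpos⟩ hcol heven hdeg).exists_extension φ hφ.1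
    fun e he f hf hef => (hdist e he f hf hef).disjoint_edgeNbhd

/-- A distance-3 precoloring of the iterated Cartesian product of Class 1
graphs with at most `∑ Δ(Gᵢ)` colors is extendable, provided `∑ Δ(Gᵢ)` is even and
`2Δ(Gᵢ) < ∑ Δ(Gⱼ)` for every `i`. -/
theorem extend_distance3_boxProdPi {k : ℕ} (hk : 2 ≤ k) {V : Fin k → Type*}
    [∀ i, Fintype (V i)] (G : ∀ i, SimpleGraph (V i))
    (hclass : ∀ i, IsClassOne (G i))
    (hedge : ∀ i, (G i).edgeSet.Nonempty)
    (heven : Even (∑ i, (G i).maxDegree))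
    (hdeg : ∀ i, 2 * (G i).maxDegree < ∑ j, (G j).maxDegree)
    (E₀ : Set (Sym2 (∀ i, V i)))
    (φ : Sym2 (∀ i, V i) → Fin (∑ i, (G i).maxDegree))
    (hφ : IsProperEdgeColoringOn (boxProdPi G) E₀ φ)
    (hdist : ∀ e ∈ E₀, ∀ f ∈ E₀, e ≠ f → EdgeDistGE (boxProdPi G) e f 3) :
    ∃ c : Sym2 (∀ i, V i) → Fin (∑ i, (G i).maxDegree),
      IsProperEdgeColoring (boxProdPi G) c ∧ ∀ e ∈ E₀, c e = φ e :=
  extend_distance3_boxProdPi_general hk G hclass heven hdeg E₀ φ hφ hdist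
end

section
/- Let k ≥ 1 and let C₂ₖ₊₁ be the odd cycle on 2k+1 vertices. Let φ be a partial proper edge coloring of the Cartesian product C₂ₖ₊₁ □ K₂ defined on a set E₀ of edges using at most 3 colors, such that any two distinct edges of E₀ are at distance at least 3 in C₂ₖ₊₁ □ K₂. Then φ extends to a proper edge coloring of C₂ₖ₊₁ □ K₂ using 3 colors. -/
open SimpleGraph
open scoped Classical

/-! Given a proper 3-coloring `c` of the cycle, give both copies of the cycle edge `i(i+1)` the
color `c i` and the rung at `j` the color different from `c (j - 1)` and `c j`: this is a proper
edge coloring of the prism. A precolored cycle edge at `i` then demands the value of `c i`, and a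
precolored rung of color `r` at `j` is realised by `c (j - 1) = r + 1` and `c j = r + 2`. As the
precolored edges are at distance at least 3, two demands on one vertex come from one edge, and
demands on neighbouring vertices come from one rung, hence differ. A partial coloring of a cycle
without conflicting neighbours extends greedily: walking around from a demanded vertex, each free
vertex avoids the color of its predecessor and the demand on its successor. -/

-- For `a ≠ b`, `-(a + b)` is the third color since `0 + 1 + 2 = 0` in `Fin 3`.
def freshColor (a b : Fin 3) : Fin 3 := if a = b then a + 1 else -(a + b)

theorem freshColor_ne_left (a b : Fin 3) : freshColor a b ≠ a := by revert a b; decide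

theorem freshColor_ne_right (a b : Fin 3) : freshColor a b ≠ b := by revert a b; decide

theorem freshColor_add_one_add_two (r : Fin 3) : freshColor (r + 1) (r + 2) = r := by
  revert r; decide

noncomputable def choiceOr {β : Type*} (Q : β → Prop) (x : β) : β :=
  if h : ∃ a, Q a then h.choose else x

theorem choiceOr_eq {β : Type*} {Q : β → Prop} {a : β} (hQ : ∀ a b, Q a → Q b → a = b)
    (ha : Q a) (x : β) : choiceOr Q x = a := by
  have h : ∃ a, Q a := ⟨a, ha⟩
  rw [choiceOr, dif_pos h]
  exact hQ _ _ h.choose_spec ha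

theorem choiceOr_of_not_exists {β : Type*} {Q : β → Prop} (h : ¬∃ a, Q a) (x : β) :
    choiceOr Q x = x :=
  dif_neg h

section Cycle

open Fin.NatCast

variable {N : ℕ} [NeZero N]

-- `greedyColoring P p a₀ j` is the color of the vertex `p + j`.
noncomputable def greedyColoring (P : Fin N → Fin 3 → Prop) (p : Fin N) (a₀ : Fin 3) :
    ℕ → Fin 3
  | 0 => a₀
  | j + 1 =>
    choiceOr (P (p + ((j + 1 : ℕ) : Fin N)))
      (freshColor (greedyColoring P p a₀ j)
        (choiceOr (P (p + ((j + 2 : ℕ) : Fin N))) (greedyColoring P p a₀ j)))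

theorem greedyColoring_of_demand {P : Fin N → Fin 3 → Prop}
    (hfun : ∀ i a b, P i a → P i b → a = b) {p : Fin N} {a₀ : Fin 3} (hp : P p a₀) :
    ∀ j : ℕ, ∀ a, P (p + (j : Fin N)) a → greedyColoring P p a₀ j = a
  | 0, a, ha => hfun p a₀ a hp (by simpa using ha)
  | j + 1, a, ha => choiceOr_eq (hfun _) ha _

theorem greedyColoring_ne_succ {P : Fin N → Fin 3 → Prop}
    (hfun : ∀ i a b, P i a → P i b → a = b)
    (hadj : ∀ i a b, P i a → P (i + 1) b → a ≠ b)
    {p : Fin N} {a₀ : Fin 3} (hp : P p a₀) (j : ℕ) :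
    greedyColoring P p a₀ j ≠ greedyColoring P p a₀ (j + 1) := by
  by_cases hnext : ∃ b, P (p + ((j + 1 : ℕ) : Fin N)) b
  · obtain ⟨b, hb⟩ := hnext
    rw [greedyColoring_of_demand hfun hp _ _ hb]
    by_cases hcur : ∃ a, P (p + (j : Fin N)) a
    · obtain ⟨a, ha⟩ := hcur
      rw [greedyColoring_of_demand hfun hp _ _ ha]
      exact hadj _ a b ha (by rwa [Nat.cast_succ, ← add_assoc] at hb)
    · obtain _ | j := j
      · exact (hcur ⟨a₀, by simpa using hp⟩).elim
      · rw [greedyColoring, choiceOr_of_not_exists hcur, choiceOr_eq (hfun _) hb]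
        exact freshColor_ne_right _ _
  · rw [greedyColoring, choiceOr_of_not_exists hnext]
    exact (freshColor_ne_left _ _).symm

theorem exists_coloring_extending_of_demand {P : Fin N → Fin 3 → Prop}
    (hfun : ∀ i a b, P i a → P i b → a = b)
    (hadj : ∀ i a b, P i a → P (i + 1) b → a ≠ b)
    {p : Fin N} {a₀ : Fin 3} (hp : P p a₀) :
    ∃ c : Fin N → Fin 3, (∀ i, c i ≠ c (i + 1)) ∧ ∀ i a, P i a → c i = a := by
  set s := greedyColoring P p a₀
  have hs : ∀ j : ℕ, ∀ a, P (p + (j : Fin N)) a → s j = a :=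
    greedyColoring_of_demand hfun hp
  have hwrap : ∀ j, j ≤ N → s (j % N) = s j := by
    intro j hj
    rcases hj.lt_or_eq with hj | rfl
    · rw [Nat.mod_eq_of_lt hj]
    · rw [Nat.mod_self, hs 0 a₀ (by simpa using hp), hs _ a₀ (by simpa using hp)]
  refine ⟨fun i => s (i - p).val, fun i => ?_, fun i a ha => hs _ a (by simpa using ha)⟩
  have hsucc : ((i + 1 - p).val) = ((i - p).val + 1) % N := by
    rw [show i + 1 - p = i - p + 1 by abel, Fin.val_add, Fin.val_one', Nat.add_mod_mod]
  simp only [hsucc, hwrap _ (i - p).isLt]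
  exact greedyColoring_ne_succ hfun hadj hp _

theorem exists_cycle_coloring_extending {n : ℕ} (P : Fin (n + 2) → Fin 3 → Prop)
    (hfun : ∀ i a b, P i a → P i b → a = b)
    (hadj : ∀ i a b, P i a → P (i + 1) b → a ≠ b) :
    ∃ c : Fin (n + 2) → Fin 3, (∀ i, c i ≠ c (i + 1)) ∧ ∀ i a, P i a → c i = a := by
  by_cases h : ∃ p a₀, P p a₀
  · obtain ⟨p, a₀, hp⟩ := h
    exact exists_coloring_extending_of_demand hfun hadj hp
  · obtain ⟨c, hc, -⟩ := exists_coloring_extending_of_demand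
      (P := fun (i : Fin (n + 2)) a => i = 0 ∧ a = 0) (by simp_all) (by simp_all) ⟨rfl, rfl⟩
    exact ⟨c, hc, fun i a ha => (h ⟨i, a, ha⟩).elim⟩

end Cycle

theorem Fin.self_ne_add_one_add_one {n : ℕ} (i : Fin (n + 3)) : i ≠ i + 1 + 1 := by
  rw [add_assoc, ne_eq, left_eq_add, Fin.ext_iff, Fin.val_add]
  simp [Nat.mod_eq_of_lt]

theorem Fin.sub_one_ne_add_one {n : ℕ} (i : Fin (n + 3)) : i - 1 ≠ i + 1 := by
  have := self_ne_add_one_add_one (i - 1)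
  rwa [sub_add_cancel] at this

namespace Prism

variable {n : ℕ}

local notation "Γ" => SimpleGraph.boxProd (cycleGraph (n + 3)) (⊤ : SimpleGraph (Fin 2))

def cycleEdge (ε : Fin 2) (i : Fin (n + 3)) : Sym2 (Fin (n + 3) × Fin 2) :=
  s((i, ε), (i + 1, ε))

def rung (i : Fin (n + 3)) : Sym2 (Fin (n + 3) × Fin 2) := s((i, 0), (i, 1))

theorem mk_vertical_eq_rung (z : Fin (n + 3) × Fin 2) : s(z, (z.1, z.2 + 1)) = rung z.1 := by
  obtain ⟨i, ε⟩ := z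
  fin_cases ε
  · rfl
  · exact Sym2.eq_swap

theorem adj_iff {x y : Fin (n + 3) × Fin 2} :
    (Γ).Adj x y ↔ y = (x.1, x.2 + 1) ∨ y = (x.1 + 1, x.2) ∨ y = (x.1 - 1, x.2) := by
  obtain ⟨i, ε⟩ := x
  obtain ⟨j, δ⟩ := y
  simp only [boxProd_adj, cycleGraph_adj, top_adj, Prod.mk.injEq, sub_eq_iff_eq_add]
  have hδ : ε ≠ δ ↔ δ = ε + 1 := by revert ε δ; decide
  have hj : i = 1 + j ↔ j = i - 1 := by rw [eq_sub_iff_add_eq, add_comm j, eq_comm]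
  rw [hδ, hj, add_comm 1 i]
  tauto

theorem rung_injective : Function.Injective (rung (n := n)) := by
  intro i j h
  simpa [rung, Sym2.eq_iff] using h

theorem cycleEdge_ne_rung (ε : Fin 2) (i j : Fin (n + 3)) : cycleEdge ε i ≠ rung j := by
  simp +contextual [cycleEdge, rung]

theorem cycleEdge_ne_cycleEdge_succ (ε δ : Fin 2) (i : Fin (n + 3)) :
    cycleEdge ε i ≠ cycleEdge δ (i + 1) := by
  simp [cycleEdge, Fin.self_ne_add_one_add_one]

theorem exists_eq_rung_or_cycleEdge {e : Sym2 (Fin (n + 3) × Fin 2)} (he : e ∈ (Γ).edgeSet) :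
    (∃ j, e = rung j) ∨ ∃ ε i, e = cycleEdge ε i := by
  induction e using Sym2.ind with
  | h z w =>
    have hzw : (Γ).Adj z w := he
    rcases adj_iff.1 hzw with rfl | rfl | rfl
    · exact Or.inl ⟨z.1, mk_vertical_eq_rung z⟩
    · exact Or.inr ⟨z.2, z.1, rfl⟩
    · refine Or.inr ⟨z.2, z.1 - 1, ?_⟩
      rw [cycleEdge, sub_add_cancel, Sym2.eq_swap]

-- The last branch only concerns non-edges.
def coloring (c : Fin (n + 3) → Fin 3) : Sym2 (Fin (n + 3) × Fin 2) → Fin 3 :=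
  Sym2.lift ⟨fun x y =>
    if x.1 = y.1 then freshColor (c (x.1 - 1)) (c x.1)
    else if y.1 = x.1 + 1 then c x.1
    else if x.1 = y.1 + 1 then c y.1
    else 0, fun x y => by
    have := Fin.self_ne_add_one_add_one x.1
    have := Fin.self_ne_add_one_add_one y.1
    dsimp only
    split_ifs <;> first | rfl | grind⟩

theorem coloring_vertical (c : Fin (n + 3) → Fin 3) (z : Fin (n + 3) × Fin 2) :
    coloring c s(z, (z.1, z.2 + 1)) = freshColor (c (z.1 - 1)) (c z.1) := by
  simp [coloring]

theorem coloring_succ (c : Fin (n + 3) → Fin 3) (z : Fin (n + 3) × Fin 2) :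
    coloring c s(z, (z.1 + 1, z.2)) = c z.1 := by
  simp [coloring]

theorem coloring_pred (c : Fin (n + 3) → Fin 3) (z : Fin (n + 3) × Fin 2) :
    coloring c s(z, (z.1 - 1, z.2)) = c (z.1 - 1) := by
  simp [coloring, Fin.sub_one_ne_add_one, eq_sub_iff_add_eq]

theorem coloring_cycleEdge (c : Fin (n + 3) → Fin 3) (ε : Fin 2) (i : Fin (n + 3)) :
    coloring c (cycleEdge ε i) = c i :=
  coloring_succ c (i, ε)

theorem coloring_rung (c : Fin (n + 3) → Fin 3) (j : Fin (n + 3)) :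
    coloring c (rung j) = freshColor (c (j - 1)) (c j) :=
  coloring_vertical c (j, 0)

theorem coloring_isProper {c : Fin (n + 3) → Fin 3} (hc : ∀ i, c i ≠ c (i + 1)) :
    IsProperEdgeColoring Γ (coloring c) := by
  rintro e he f hf hne ⟨z, hze, hzf⟩
  obtain ⟨w, rfl⟩ := Sym2.mem_iff_exists.1 hze
  obtain ⟨w', rfl⟩ := Sym2.mem_iff_exists.1 hzf
  have hpred : c (z.1 - 1) ≠ c z.1 := by simpa using hc (z.1 - 1)
  have hw : (Γ).Adj z w := he
  have hw' : (Γ).Adj z w' := hf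
  rcases adj_iff.1 hw with rfl | rfl | rfl <;> rcases adj_iff.1 hw' with rfl | rfl | rfl <;>
    simp only [coloring_vertical, coloring_succ, coloring_pred] <;>
    first
    | exact (hne rfl).elim
    | exact freshColor_ne_left _ _ | exact freshColor_ne_right _ _
    | exact (freshColor_ne_left _ _).symm | exact (freshColor_ne_right _ _).symm
    | exact hpred | exact hpred.symm

-- The edges whose precolor constrains `c i`.
def window (i : Fin (n + 3)) : Set (Sym2 (Fin (n + 3) × Fin 2)) :=
  {e | (∃ ε, e = cycleEdge ε i) ∨ e = rung i ∨ e = rung (i + 1)}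

theorem cycleEdge_mem_window (ε : Fin 2) (i : Fin (n + 3)) : cycleEdge ε i ∈ window i :=
  Or.inl ⟨ε, rfl⟩

theorem rung_mem_window (i : Fin (n + 3)) : rung i ∈ window i :=
  Or.inr (Or.inl rfl)

theorem rung_succ_mem_window (i : Fin (n + 3)) : rung (i + 1) ∈ window i :=
  Or.inr (Or.inr rfl)

theorem mk_mem_rung (i : Fin (n + 3)) (ε : Fin 2) : (i, ε) ∈ rung i := by
  fin_cases ε <;> simp [rung]

theorem fst_eq_of_mem_window {i : Fin (n + 3)} {e : Sym2 (Fin (n + 3) × Fin 2)}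
    {y : Fin (n + 3) × Fin 2} (he : e ∈ window i) (hy : y ∈ e) : y.1 = i ∨ y.1 = i + 1 := by
  rcases he with ⟨ε, rfl⟩ | rfl | rfl <;>
    simp only [cycleEdge, rung, Sym2.mem_iff] at hy <;> rcases hy with rfl | rfl <;> simp

theorem eq_rung_of_mem_window_succ {i : Fin (n + 3)} {e : Sym2 (Fin (n + 3) × Fin 2)}
    (he : e ∈ window i) (he' : e ∈ window (i + 1)) : e = rung (i + 1) := by
  rcases he with ⟨ε, rfl⟩ | rfl | rfl
  · rcases he' with ⟨δ, h⟩ | h | h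
    exacts [(cycleEdge_ne_cycleEdge_succ ε δ i h).elim, (cycleEdge_ne_rung _ _ _ h).elim,
      (cycleEdge_ne_rung _ _ _ h).elim]
  · rcases he' with ⟨δ, h⟩ | h | h
    · exact (cycleEdge_ne_rung _ _ _ h.symm).elim
    · simpa using rung_injective h
    · exact (Fin.self_ne_add_one_add_one i (rung_injective h)).elim
  · rfl

theorem cycle_edist_le_one {a b : Fin (n + 3)} (h : b = a + 1 ∨ b = a ∨ a = b + 1) :
    (cycleGraph (n + 3)).edist a b ≤ 1 := by
  rw [edist_le_one_iff_adj_or_eq, cycleGraph_adj]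
  rcases h with rfl | rfl | rfl <;> simp

theorem cycle_edist_le_two {a b : Fin (n + 3)} (h : b = a ∨ b = a + 1 ∨ b = a + 1 + 1) :
    (cycleGraph (n + 3)).edist a b ≤ 2 := by
  rcases h with rfl | rfl | rfl
  · simp
  · exact (cycle_edist_le_one (Or.inl rfl)).trans one_le_two
  · calc (cycleGraph (n + 3)).edist a (a + 1 + 1)
        ≤ (cycleGraph (n + 3)).edist a (a + 1) + (cycleGraph (n + 3)).edist (a + 1) (a + 1 + 1) :=
          SimpleGraph.edist_triangle
      _ ≤ 1 + 1 := add_le_add (cycle_edist_le_one (Or.inl rfl)) (cycle_edist_le_one (Or.inl rfl))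
      _ = 2 := one_add_one_eq_two

theorem top_edist_le_one (ε δ : Fin 2) : (⊤ : SimpleGraph (Fin 2)).edist ε δ ≤ 1 :=
  edist_le_one_iff_adj_or_eq.2 (by simpa using ne_or_eq ε δ)

theorem exists_edist_le_two_of_mem_window {i : Fin (n + 3)} {e : Sym2 (Fin (n + 3) × Fin 2)}
    (he : e ∈ window i) {y : Fin (n + 3) × Fin 2}
    (hy : y.1 = i ∨ y.1 = i + 1 ∨ y.1 = i + 1 + 1) :
    ∃ x ∈ e, (Γ).edist x y ≤ 2 := by
  have hy' : y.1 = i + 1 + 1 ∨ y.1 = i + 1 ∨ i + 1 = y.1 + 1 := by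
    rcases hy with h | h | h <;> simp [h]
  rcases he with ⟨ε, rfl⟩ | rfl | rfl
  · refine ⟨(i + 1, ε), by simp [cycleEdge], ?_⟩
    rw [edist_boxProd]
    exact (add_le_add (cycle_edist_le_one hy') (top_edist_le_one _ _)).trans_eq one_add_one_eq_two
  · refine ⟨(i, y.2), mk_mem_rung i y.2, ?_⟩
    rw [edist_boxProd, SimpleGraph.edist_self, add_zero]
    exact cycle_edist_le_two hy
  · refine ⟨(i + 1, y.2), mk_mem_rung _ _, ?_⟩
    rw [edist_boxProd, SimpleGraph.edist_self, add_zero]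
    exact (cycle_edist_le_one hy').trans one_le_two

theorem not_edgeDistGE_three_of_mem_window {i : Fin (n + 3)} {e f : Sym2 (Fin (n + 3) × Fin 2)}
    (he : e ∈ window i) (hf : f ∈ window i ∨ f ∈ window (i + 1)) :
    ¬EdgeDistGE Γ e f 3 := by
  intro hef
  have hy : f.out.1 ∈ f := Sym2.out_fst_mem f
  obtain ⟨x, hx, hxy⟩ := exists_edist_le_two_of_mem_window he (y := f.out.1) (by
    rcases hf with hf | hf <;> rcases fst_eq_of_mem_window hf hy with h | h <;> simp [h])
  have := (hef x hx _ hy).trans hxy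
  norm_num at this

def demandedColor (φ : Sym2 (Fin (n + 3) × Fin 2) → Fin 3) (i : Fin (n + 3))
    (e : Sym2 (Fin (n + 3) × Fin 2)) : Fin 3 :=
  if e = rung i then φ e + 2 else if e = rung (i + 1) then φ e + 1 else φ e

theorem demandedColor_cycleEdge (φ : Sym2 (Fin (n + 3) × Fin 2) → Fin 3) (ε : Fin 2)
    (i : Fin (n + 3)) : demandedColor φ i (cycleEdge ε i) = φ (cycleEdge ε i) := by
  rw [demandedColor, if_neg (cycleEdge_ne_rung _ _ _), if_neg (cycleEdge_ne_rung _ _ _)]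

theorem demandedColor_rung (φ : Sym2 (Fin (n + 3) × Fin 2) → Fin 3) (i : Fin (n + 3)) :
    demandedColor φ i (rung i) = φ (rung i) + 2 :=
  if_pos rfl

theorem demandedColor_rung_succ (φ : Sym2 (Fin (n + 3) × Fin 2) → Fin 3) (i : Fin (n + 3)) :
    demandedColor φ i (rung (i + 1)) = φ (rung (i + 1)) + 1 := by
  rw [demandedColor, if_neg (rung_injective.ne (by simp)), if_pos rfl]

theorem exists_extension (E₀ : Set (Sym2 (Fin (n + 3) × Fin 2)))
    (φ : Sym2 (Fin (n + 3) × Fin 2) → Fin 3) (hE₀ : E₀ ⊆ (Γ).edgeSet)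
    (hdist : ∀ e ∈ E₀, ∀ f ∈ E₀, e ≠ f → EdgeDistGE Γ e f 3) :
    ∃ c : Sym2 (Fin (n + 3) × Fin 2) → Fin 3,
      IsProperEdgeColoring Γ c ∧ ∀ e ∈ E₀, c e = φ e := by
  have eq_of_mem_window : ∀ {i e f}, e ∈ E₀ → f ∈ E₀ → e ∈ window i →
      f ∈ window i ∨ f ∈ window (i + 1) → e = f := fun he hf hei hfi =>
    by_contra fun hne => not_edgeDistGE_three_of_mem_window hei hfi (hdist _ he _ hf hne)
  obtain ⟨c, hc, hcP⟩ := exists_cycle_coloring_extending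
    (fun i a => ∃ e ∈ E₀, e ∈ window i ∧ demandedColor φ i e = a)
    (by
      rintro i _ _ ⟨e, he, hei, rfl⟩ ⟨f, hf, hfi, rfl⟩
      rw [eq_of_mem_window he hf hei (Or.inl hfi)])
    (by
      rintro i _ _ ⟨e, he, hei, rfl⟩ ⟨f, hf, hfi, rfl⟩
      obtain rfl := eq_of_mem_window he hf hei (Or.inr hfi)
      obtain rfl := eq_rung_of_mem_window_succ hei hfi
      rw [demandedColor_rung_succ, demandedColor_rung]
      simp)
  refine ⟨coloring c, coloring_isProper hc, fun e he => ?_⟩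
  rcases exists_eq_rung_or_cycleEdge (hE₀ he) with ⟨j, rfl⟩ | ⟨ε, i, rfl⟩
  · obtain ⟨i, rfl⟩ : ∃ i, j = i + 1 := ⟨j - 1, (sub_add_cancel j 1).symm⟩
    have hleft : c i = φ (rung (i + 1)) + 1 :=
      hcP _ _ ⟨_, he, rung_succ_mem_window i, demandedColor_rung_succ φ i⟩
    have hright : c (i + 1) = φ (rung (i + 1)) + 2 :=
      hcP _ _ ⟨_, he, rung_mem_window _, demandedColor_rung φ _⟩
    rw [coloring_rung, add_sub_cancel_right, hleft, hright, freshColor_add_one_add_two]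
  · rw [coloring_cycleEdge]
    exact hcP _ _ ⟨_, he, cycleEdge_mem_window ε i, demandedColor_cycleEdge φ ε i⟩

end Prism

/-- A distance-3 precoloring of `C₂ₖ₊₁ □ K₂` (`k ≥ 1`) with at most 3
colors is extendable to a proper 3-edge coloring. -/
theorem extend_distance3_oddCycle_times_edge {k : ℕ} (hk : 1 ≤ k)
    (E₀ : Set (Sym2 (Fin (2 * k + 1) × Fin 2)))
    (φ : Sym2 (Fin (2 * k + 1) × Fin 2) → Fin 3)
    (hφ : IsProperEdgeColoringOn (cycleGraph (2 * k + 1) □ (⊤ : SimpleGraph (Fin 2))) E₀ φ)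
    (hdist : ∀ e ∈ E₀, ∀ f ∈ E₀, e ≠ f →
      EdgeDistGE (cycleGraph (2 * k + 1) □ (⊤ : SimpleGraph (Fin 2))) e f 3) :
    ∃ c : Sym2 (Fin (2 * k + 1) × Fin 2) → Fin 3,
      IsProperEdgeColoring (cycleGraph (2 * k + 1) □ (⊤ : SimpleGraph (Fin 2))) c ∧
        ∀ e ∈ E₀, c e = φ e := by
  obtain ⟨n, hn⟩ : ∃ n, 2 * k + 1 = n + 3 := ⟨2 * k - 2, by omega⟩
  revert E₀ φ
  rw [hn]
  exact fun E₀ φ hφ hdist => Prism.exists_extension E₀ φ hφ.1 hdist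
end

section
/- Let G be a bipartite simple graph with maximum degree Δ(G) ≥ 1. Let φ be a partial proper edge coloring of the Cartesian product G □ C₄ defined on a set E₀ of edges using at most Δ(G) + 2 colors, such that any two distinct edges of E₀ are at distance at least 3 in G □ C₄. Then φ extends to a proper edge coloring of G □ C₄ using Δ(G) + 2 colors. -/
open SimpleGraph
open scoped Classical

/-!
Color `G` properly with `Δ` colors (Kőnig, as `G` is bipartite) and give `G □ C₄` the base
coloring that copies this coloring onto every layer `G × {i}` and colors each fiber `{u} × C₄`
alternately with two new colors. Any single edge `e` can then be given any prescribed color by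
a local recoloring — at most three swaps of alternating 4-cycles and recolorings of an edge with a
color missing at both its ends — which needs the base coloring only on a small zone of edges
around `e` and changes nothing outside it. Zones of edges at distance at least 3 are disjoint, so
the precolored edges can be treated one after another.
-/

section ProperOn

variable {V β : Type*} {E E' : Set (Sym2 V)} {c : Sym2 V → β}

def ProperOn (E : Set (Sym2 V)) (c : Sym2 V → β) : Prop :=
  ∀ e ∈ E, ∀ f ∈ E, e ≠ f → (∃ v, v ∈ e ∧ v ∈ f) → c e ≠ c f

def IsMissingAt (E : Set (Sym2 V)) (c : Sym2 V → β) (a : β) (x : V) : Prop :=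
  ∀ f ∈ E, x ∈ f → c f ≠ a

theorem ProperOn.mono (h : ProperOn E c) (hE : E' ⊆ E) : ProperOn E' c :=
  fun e he f hf => h e (hE he) f (hE hf)

theorem ProperOn.comp {γ : Type*} (h : ProperOn E c) {φ : β → γ} (hφ : Function.Injective φ) :
    ProperOn E (φ ∘ c) :=
  fun e he f hf hef hef' hc => h e he f hf hef hef' (hφ hc)

theorem ProperOn.eq_of_color_eq (h : ProperOn E c) {e f : Sym2 V} (he : e ∈ E) (hf : f ∈ E)
    {x : V} (hxe : x ∈ e) (hxf : x ∈ f) (hc : c e = c f) : e = f := by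
  by_contra hne
  exact h e he f hf hne ⟨x, hxe, hxf⟩ hc

theorem ProperOn.update [DecidableEq V] (h : ProperOn E c) {u v : V} {a : β}
    (hu : IsMissingAt E c a u) (hv : IsMissingAt E c a v) :
    ProperOn (insert s(u, v) E) (Function.update c s(u, v) a) := by
  have hmiss : ∀ f ∈ E, f ≠ s(u, v) → ∀ x ∈ s(u, v), x ∈ f → c f ≠ a := by
    intro f hf _ x hx hxf
    rcases Sym2.mem_iff.mp hx with rfl | rfl
    exacts [hu f hf hxf, hv f hf hxf]
  intro e he f hf hef ⟨x, hxe, hxf⟩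
  rcases eq_or_ne e s(u, v) with rfl | he'
  · rw [Function.update_self, Function.update_of_ne hef.symm]
    exact (hmiss f (hf.resolve_left hef.symm) hef.symm x hxe hxf).symm
  rcases eq_or_ne f s(u, v) with rfl | hf'
  · rw [Function.update_self, Function.update_of_ne he']
    exact hmiss e (he.resolve_left he') he' x hxf hxe
  rw [Function.update_of_ne he', Function.update_of_ne hf']
  exact h e (he.resolve_left he') f (hf.resolve_left hf') hef ⟨x, hxe, hxf⟩

theorem ProperOn.piecewise_swap (h : ProperOn E c) {S : Set (Sym2 V)} [∀ g, Decidable (g ∈ S)]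
    {a b : β} (hS : ∀ g ∈ S, ∀ f ∈ E, (c f = a ∨ c f = b) → (∃ x, x ∈ g ∧ x ∈ f) → f ∈ S) :
    ProperOn E (S.piecewise (Equiv.swap a b ∘ c) c) := by
  have hmixed : ∀ e ∈ E, ∀ f ∈ E, e ≠ f → (∃ v, v ∈ e ∧ v ∈ f) → e ∈ S → f ∉ S →
      Equiv.swap a b (c e) ≠ c f := by
    intro e he f hf hef hshare heS hfS
    have hf_ab : c f ≠ a ∧ c f ≠ b := by
      constructor <;> intro hcf <;> exact hfS (hS e heS f hf (by simp [hcf]) hshare)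
    rw [← Equiv.swap_apply_of_ne_of_ne hf_ab.1 hf_ab.2]
    exact (Equiv.swap a b).injective.ne (h e he f hf hef hshare)
  intro e he f hf hef hshare
  by_cases heS : e ∈ S <;> by_cases hfS : f ∈ S <;>
    simp only [Set.piecewise_eq_of_mem, Set.piecewise_eq_of_notMem, heS, hfS,
      Function.comp_apply, not_false_eq_true]
  · exact (Equiv.swap a b).injective.ne (h e he f hf hef hshare)
  · exact hmixed e he f hf hef hshare heS hfS
  · exact (hmixed f hf e he hef.symm (by simpa [and_comm] using hshare) hfS heS).symm
  · exact h e he f hf hef hshare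

def cycle4Edges (x₁ x₂ x₃ x₄ : V) : Set (Sym2 V) :=
  {s(x₁, x₂), s(x₂, x₃), s(x₃, x₄), s(x₄, x₁)}

/-- An alternating `a`/`b` four-cycle is a whole Kempe component, so its colors can be
exchanged. -/
theorem ProperOn.exists_swap_cycle4 (h : ProperOn E c) {x₁ x₂ x₃ x₄ : V} {a b : β}
    (h₁ : s(x₁, x₂) ∈ E) (h₂ : s(x₂, x₃) ∈ E) (h₃ : s(x₃, x₄) ∈ E) (h₄ : s(x₄, x₁) ∈ E)
    (c₁ : c s(x₁, x₂) = a) (c₂ : c s(x₂, x₃) = b) (c₃ : c s(x₃, x₄) = a)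
    (c₄ : c s(x₄, x₁) = b) :
    ∃ c', ProperOn E c' ∧ c' s(x₁, x₂) = b ∧ ∀ g ∉ cycle4Edges x₁ x₂ x₃ x₄, c' g = c g := by
  have m₁ : s(x₁, x₂) ∈ cycle4Edges x₁ x₂ x₃ x₄ := by simp [cycle4Edges]
  have m₂ : s(x₂, x₃) ∈ cycle4Edges x₁ x₂ x₃ x₄ := by simp [cycle4Edges]
  have m₃ : s(x₃, x₄) ∈ cycle4Edges x₁ x₂ x₃ x₄ := by simp [cycle4Edges]
  have m₄ : s(x₄, x₁) ∈ cycle4Edges x₁ x₂ x₃ x₄ := by simp [cycle4Edges]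
  refine ⟨_, h.piecewise_swap (a := a) (b := b) ?_,
    by simp [Set.piecewise_eq_of_mem _ _ _ m₁, c₁], fun g hg => Set.piecewise_eq_of_notMem _ _ _ hg⟩
  have hclosed : ∀ ga ∈ E, ∀ gb ∈ E, c ga = a → c gb = b → ga ∈ cycle4Edges x₁ x₂ x₃ x₄ →
      gb ∈ cycle4Edges x₁ x₂ x₃ x₄ → ∀ x, x ∈ ga → x ∈ gb →
      ∀ f ∈ E, (c f = a ∨ c f = b) → x ∈ f → f ∈ cycle4Edges x₁ x₂ x₃ x₄ := by
    rintro ga hga gb hgb hca hcb hga' hgb' x hxa hxb f hf (hf' | hf') hxf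
    · rwa [h.eq_of_color_eq hf hga hxf hxa (hf'.trans hca.symm)]
    · rwa [h.eq_of_color_eq hf hgb hxf hxb (hf'.trans hcb.symm)]
  rintro g hg f hf hf' ⟨x, hxg, hxf⟩
  simp only [cycle4Edges, Set.mem_insert_iff, Set.mem_singleton_iff] at hg
  rcases hg with rfl | rfl | rfl | rfl <;> rcases Sym2.mem_iff.mp hxg with rfl | rfl
  · exact hclosed _ h₁ _ h₄ c₁ c₄ m₁ m₄ _ (by simp) (by simp) f hf hf' hxf
  · exact hclosed _ h₁ _ h₂ c₁ c₂ m₁ m₂ _ (by simp) (by simp) f hf hf' hxf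
  · exact hclosed _ h₁ _ h₂ c₁ c₂ m₁ m₂ _ (by simp) (by simp) f hf hf' hxf
  · exact hclosed _ h₃ _ h₂ c₃ c₂ m₃ m₂ _ (by simp) (by simp) f hf hf' hxf
  · exact hclosed _ h₃ _ h₂ c₃ c₂ m₃ m₂ _ (by simp) (by simp) f hf hf' hxf
  · exact hclosed _ h₃ _ h₄ c₃ c₄ m₃ m₄ _ (by simp) (by simp) f hf hf' hxf
  · exact hclosed _ h₃ _ h₄ c₃ c₄ m₃ m₄ _ (by simp) (by simp) f hf hf' hxf
  · exact hclosed _ h₁ _ h₄ c₁ c₄ m₁ m₄ _ (by simp) (by simp) f hf hf' hxf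

end ProperOn

section Konig

variable {V β : Type*} {G : SimpleGraph V} {E : Set (Sym2 V)} {κ : Sym2 V → β}

/-- Along an `a`/`b`-colored trail, the color of the last edge is forced by the parity of the
trail, which a 2-coloring `C` of the vertices reads off its endpoints. -/
theorem SimpleGraph.Walk.IsTrail.exists_mem_edges_color_iff {K : SimpleGraph V} {y x : V}
    {p : K.Walk y x} (hp : p.IsTrail) {C : V → Fin 2} (hC : ∀ ⦃x y⦄, K.Adj x y → C x ≠ C y)
    (hκ : ProperOn K.edgeSet κ) {a b : β} (hab : ∀ g ∈ K.edgeSet, κ g = a ∨ κ g = b)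
    (hlen : 0 < p.length) (γ : β) (hγ : γ = a ∨ γ = b) (hy : ∀ g ∈ p.edges, y ∈ g → κ g ≠ γ) :
    ∃ g ∈ p.edges, x ∈ g ∧ (κ g = γ ↔ C x = C y) := by
  induction p generalizing γ with
  | nil => simp at hlen
  | @cons y w x h q ih =>
    rw [Walk.isTrail_cons] at hp
    have h₀ : s(y, w) ∈ K.edgeSet := h
    have hne : κ s(y, w) ≠ γ := hy _ (by simp) (by simp)
    by_cases hq : q.length = 0
    · obtain rfl := Walk.eq_of_length_eq_zero hq
      exact ⟨s(y, w), by simp, by simp, iff_of_false hne (hC h).symm⟩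
    obtain ⟨g, hg, hxg, hiff⟩ := ih hp.1 (Nat.pos_of_ne_zero hq) (κ s(y, w)) (hab _ h₀)
      fun g hg hwg => hκ g (q.edges_subset_edgeSet hg) _ h₀ (ne_of_mem_of_not_mem hg hp.2)
        ⟨w, hwg, by simp⟩
    refine ⟨g, by simp [hg], hxg, ?_⟩
    have hparity : ∀ i j k : Fin 2, j ≠ k → (i = j ↔ ¬ i = k) := by decide
    rw [hparity (C x) (C y) (C w) (hC h), ← hiff]
    have := hab g (q.edges_subset_edgeSet hg)
    have := hab _ h₀
    grind

def kempeGraph (E : Set (Sym2 V)) (κ : Sym2 V → β) (a b : β) : SimpleGraph V :=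
  fromEdgeSet {g ∈ E | κ g = a ∨ κ g = b}

theorem reachable_of_mem_edgeSet {K : SimpleGraph V} {g : Sym2 V} (hg : g ∈ K.edgeSet) {x y : V}
    (hx : x ∈ g) (hy : y ∈ g) : K.Reachable x y := by
  induction g using Sym2.ind with
  | _ u v =>
    have huv : K.Adj u v := hg
    rcases Sym2.mem_iff.mp hx with rfl | rfl <;> rcases Sym2.mem_iff.mp hy with rfl | rfl
    exacts [.rfl, huv.reachable, huv.symm.reachable, .rfl]

theorem not_reachable_kempeGraph (C : G.Coloring (Fin 2)) (hE : E ⊆ G.edgeSet)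
    (hκ : ProperOn E κ) {u v : V} (huv : G.Adj u v) {a b : β} (ha : IsMissingAt E κ a u)
    (hb : IsMissingAt E κ b v) : ¬ (kempeGraph E κ a b).Reachable u v := by
  rintro ⟨p⟩
  have hK : (kempeGraph E κ a b).edgeSet ⊆ {g ∈ E | κ g = a ∨ κ g = b} := by
    simp only [kempeGraph, edgeSet_fromEdgeSet]
    exact Set.sdiff_subset
  have hC : ∀ ⦃x y⦄, (kempeGraph E κ a b).Adj x y → C x ≠ C y :=
    fun x y hxy => C.valid (hE (hK ((mem_edgeSet _).mpr hxy)).1)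
  have hlen : 0 < p.toPath.1.length :=
    Nat.pos_of_ne_zero fun h => huv.ne (Walk.eq_of_length_eq_zero h)
  obtain ⟨g, hg, hvg, hiff⟩ := p.toPath.2.isTrail.exists_mem_edges_color_iff hC
    (hκ.mono fun g hg => (hK hg).1) (fun g hg => (hK hg).2) hlen a (.inl rfl)
    fun g hg hug => ha g (hK (p.toPath.1.edges_subset_edgeSet hg)).1 hug
  have hg' := hK (p.toPath.1.edges_subset_edgeSet hg)
  have hga : κ g ≠ a := fun h => C.valid huv.symm (hiff.mp h)
  exact hb g hg'.1 hvg (hg'.2.resolve_left hga)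

/-- Kempe interchange: swapping `a` and `b` on the `a`/`b`-component of `u` frees `b` at `u`,
and keeps it free at `v` because, by parity, that component does not reach `v`. -/
theorem ProperOn.exists_isMissingAt_both (hκ : ProperOn E κ) (C : G.Coloring (Fin 2))
    (hE : E ⊆ G.edgeSet) {u v : V} (huv : G.Adj u v) {a b : β} (ha : IsMissingAt E κ a u)
    (hb : IsMissingAt E κ b v) :
    ∃ κ', ProperOn E κ' ∧ IsMissingAt E κ' b u ∧ IsMissingAt E κ' b v := by
  set K := kempeGraph E κ a b
  set S : Set (Sym2 V) := {g ∈ E | (κ g = a ∨ κ g = b) ∧ ∃ x ∈ g, K.Reachable u x}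
  have hreach : ∀ g ∈ S, ∀ y ∈ g, K.Reachable u y := by
    rintro g ⟨hgE, hgab, x, hxg, hux⟩ y hyg
    have hgK : g ∈ K.edgeSet := by
      simp only [K, kempeGraph, edgeSet_fromEdgeSet]
      exact ⟨⟨hgE, hgab⟩, G.not_isDiag_of_mem_edgeSet (hE hgE)⟩
    exact hux.trans (reachable_of_mem_edgeSet hgK hxg hyg)
  refine ⟨S.piecewise (Equiv.swap a b ∘ κ) κ, hκ.piecewise_swap ?_, ?_, ?_⟩
  · rintro g hg f hf hfab ⟨y, hyg, hyf⟩
    exact ⟨hf, hfab, y, hyf, hreach g hg y hyg⟩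
  · intro f hf huf
    by_cases hfS : f ∈ S
    · have hfb : κ f = b := hfS.2.1.resolve_left (ha f hf huf)
      have hab : a ≠ b := fun h => ha f hf huf (hfb.trans h.symm)
      simp [Set.piecewise_eq_of_mem _ _ _ hfS, hfb, hab]
    · rw [Set.piecewise_eq_of_notMem _ _ _ hfS]
      exact fun hfb => hfS ⟨hf, .inr hfb, u, huf, .rfl⟩
  · intro f hf hvf
    have hfS : f ∉ S := fun hfS =>
      not_reachable_kempeGraph C hE hκ huv ha hb (hreach f hfS v hvf)
    rw [Set.piecewise_eq_of_notMem _ _ _ hfS]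
    exact hb f hf hvf

variable [Fintype V]

theorem exists_isMissingAt_of_degree_le [Fintype β] {s : Finset (Sym2 V)}
    (hs : ↑s ⊆ G.edgeSet) {e : Sym2 V} (he : e ∈ G.edgeSet) (hes : e ∉ s) {x : V}
    (hxe : x ∈ e) (hdeg : G.degree x ≤ Fintype.card β) (κ : Sym2 V → β) :
    ∃ a, IsMissingAt ↑s κ a x := by
  have hsub : {f ∈ s | x ∈ f} ⊆ (G.incidenceFinset x).erase e := by
    intro f hf
    rw [Finset.mem_filter] at hf
    exact Finset.mem_erase.mpr ⟨ne_of_mem_of_not_mem hf.1 hes, by simpa using ⟨hs hf.1, hf.2⟩⟩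
  have hdeg' : 0 < G.degree x := by
    rw [← card_incidenceFinset_eq_degree]
    exact Finset.card_pos.mpr ⟨e, by simpa using ⟨he, hxe⟩⟩
  have hlt : ({f ∈ s | x ∈ f}.image κ).card < (Finset.univ : Finset β).card := by
    calc ({f ∈ s | x ∈ f}.image κ).card ≤ ((G.incidenceFinset x).erase e).card :=
          Finset.card_image_le.trans (Finset.card_le_card hsub)
      _ = G.degree x - 1 := by
          rw [Finset.card_erase_of_mem (by simpa using ⟨he, hxe⟩), card_incidenceFinset_eq_degree]
      _ < _ := by rw [Finset.card_univ]; omega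
  obtain ⟨a, -, ha⟩ := Finset.exists_mem_notMem_of_card_lt_card hlt
  exact ⟨a, fun f hf hxf hfa => ha (Finset.mem_image.mpr ⟨f, by simpa using ⟨hf, hxf⟩, hfa⟩)⟩

/-- Kőnig's line coloring theorem. -/
theorem exists_properOn_edgeSet_of_colorable_two [Fintype β] [Nonempty β] (hG : G.Colorable 2)
    (hdeg : ∀ x, G.degree x ≤ Fintype.card β) : ∃ κ : Sym2 V → β, ProperOn G.edgeSet κ := by
  obtain ⟨C⟩ := hG
  suffices ∀ s : Finset (Sym2 V), ↑s ⊆ G.edgeSet → ∃ κ : Sym2 V → β, ProperOn ↑s κ by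
    simpa using this G.edgeFinset (by simp)
  intro s
  induction s using Finset.induction_on with
  | empty => exact fun _ => ⟨fun _ => Classical.arbitrary β, by simp [ProperOn]⟩
  | @insert e s hes ih =>
    intro hs
    rw [Finset.coe_insert] at hs ⊢
    obtain ⟨κ, hκ⟩ := ih ((Set.subset_insert e _).trans hs)
    have he : e ∈ G.edgeSet := hs (Set.mem_insert e _)
    have hs' : ↑s ⊆ G.edgeSet := (Set.subset_insert e _).trans hs
    induction e using Sym2.ind with
    | _ u v =>
      obtain ⟨a, ha⟩ := exists_isMissingAt_of_degree_le hs' he hes (by simp) (hdeg u) κ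
      obtain ⟨b, hb⟩ := exists_isMissingAt_of_degree_le hs' he hes (by simp) (hdeg v) κ
      obtain ⟨κ', hκ', hbu, hbv⟩ := hκ.exists_isMissingAt_both C hs' he ha hb
      exact ⟨_, hκ'.update hbu hbv⟩

end Konig

theorem exists_of_local_repairs {ε γ : Type*} (P : (ε → γ) → Prop) {b : ε → γ} (hb : P b)
    {E₀ : Set ε} (hE₀ : E₀.Finite) (φ : ε → γ) (Z : ε → ε → Prop) (hZ : ∀ e ∈ E₀, Z e e)
    (hdisj : ∀ e ∈ E₀, ∀ e' ∈ E₀, e ≠ e' → ∀ g, Z e g → ¬ Z e' g)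
    (hrepair : ∀ e ∈ E₀, ∀ c, P c → (∀ g, Z e g → c g = b g) →
      ∃ c', P c' ∧ c' e = φ e ∧ ∀ g, ¬ Z e g → c' g = c g) :
    ∃ c, P c ∧ ∀ e ∈ E₀, c e = φ e := by
  suffices ∀ S : Finset ε, ↑S ⊆ E₀ → ∃ c, P c ∧ (∀ e ∈ S, c e = φ e) ∧
      ∀ g, c g ≠ b g → ∃ e ∈ S, Z e g by
    obtain ⟨c, hc, hφ, -⟩ := this hE₀.toFinset (by simp)
    exact ⟨c, hc, fun e he => hφ e (hE₀.mem_toFinset.mpr he)⟩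
  intro S
  induction S using Finset.induction_on with
  | empty => exact fun _ => ⟨b, hb, by simp, fun g hg => absurd rfl hg⟩
  | @insert e S heS ih =>
    intro hS
    rw [Finset.coe_insert] at hS
    have he : e ∈ E₀ := hS (Set.mem_insert e _)
    have hSE : ∀ e' ∈ S, e' ∈ E₀ ∧ e ≠ e' :=
      fun e' he' => ⟨hS (Set.mem_insert_of_mem e he'), fun h => heS (h ▸ he')⟩
    obtain ⟨c, hc, hcφ, hcb⟩ := ih ((Set.subset_insert e _).trans hS)
    have hread : ∀ g, Z e g → c g = b g := by
      intro g hg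
      by_contra hne
      obtain ⟨e', he', hg'⟩ := hcb g hne
      exact hdisj e he e' (hSE e' he').1 (hSE e' he').2 g hg hg'
    obtain ⟨c', hc', hc'e, hc'c⟩ := hrepair e he c hc hread
    refine ⟨c', hc', ?_, ?_⟩
    · intro f hf
      rcases Finset.mem_insert.mp hf with rfl | hf
      · exact hc'e
      · rw [hc'c f fun hZf => hdisj e he f (hSE f hf).1 (hSE f hf).2 f hZf (hZ f (hSE f hf).1)]
        exact hcφ f hf
    · intro g hg
      by_cases hZg : Z e g
      · exact ⟨e, Finset.mem_insert_self e S, hZg⟩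
      · obtain ⟨e', he', hg'⟩ := hcb g (by rwa [← hc'c g hZg])
        exact ⟨e', Finset.mem_insert_of_mem he', hg'⟩

section Closeness

variable {W : Type*} {H : SimpleGraph W} {e e' g : Sym2 W} {P Q q : W}

def IsClose (H : SimpleGraph W) (e : Sym2 W) (P : W) : Prop :=
  ∃ q ∈ e, H.edist q P ≤ 1

def IsNear (H : SimpleGraph W) (e g : Sym2 W) : Prop :=
  ∀ P ∈ g, IsClose H e P

theorem isClose_of_mem (hP : P ∈ e) : IsClose H e P :=
  ⟨P, hP, by simp⟩

theorem isClose_of_adj (hq : q ∈ e) (hqP : H.Adj q P) : IsClose H e P :=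
  ⟨q, hq, (edist_eq_one_iff_adj.mpr hqP).le⟩

theorem isNear_mk (hP : IsClose H e P) (hQ : IsClose H e Q) : IsNear H e s(P, Q) := by
  intro R hR
  rcases Sym2.mem_iff.mp hR with rfl | rfl
  exacts [hP, hQ]

theorem isNear_self : IsNear H e e :=
  fun _ hP => isClose_of_mem hP

theorem isNear_of_mem_edgeSet (hg : g ∈ H.edgeSet) (hP : P ∈ g) (hPe : P ∈ e) : IsNear H e g := by
  obtain ⟨Q, rfl⟩ := Sym2.mem_iff_exists.mp hP
  exact isNear_mk (isClose_of_mem hPe) (isClose_of_adj hPe hg)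

theorem not_edgeDistGE_three_of_isClose (h : IsClose H e P) (h' : IsClose H e' P) :
    ¬ EdgeDistGE H e e' 3 := by
  obtain ⟨q, hq, hqP⟩ := h
  obtain ⟨q', hq', hq'P⟩ := h'
  intro hd
  have h2 : H.edist q q' ≤ 2 := calc
    H.edist q q' ≤ H.edist q P + H.edist P q' := SimpleGraph.edist_triangle
    _ ≤ 1 + 1 := add_le_add hqP (by rwa [SimpleGraph.edist_comm])
    _ = 2 := by norm_num
  have := (hd q hq q' hq').trans h2
  norm_num at this

end Closeness

section BoxC4

variable {α : Type*} {G : SimpleGraph α} {Δ : ℕ} {κ : Sym2 α → Fin Δ}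

theorem cycleGraph_four_adj_add_one : ∀ i : Fin 4, (cycleGraph 4).Adj i (i + 1) := by decide

theorem exists_of_mem_edgeSet_boxProd {β : Type*} {H : SimpleGraph β} {g : Sym2 (α × β)}
    (hg : g ∈ (G □ H).edgeSet) {u : α} {i : β} (hP : (u, i) ∈ g) :
    (∃ y, G.Adj u y ∧ g = s((u, i), (y, i))) ∨ ∃ j, H.Adj i j ∧ g = s((u, i), (u, j)) := by
  obtain ⟨⟨v, j⟩, rfl⟩ := Sym2.mem_iff_exists.mp hP
  rcases boxProd_adj.mp hg with ⟨hadj, h⟩ | ⟨hadj, h⟩ <;> dsimp only at hadj h <;> subst h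
  exacts [.inl ⟨v, hadj, rfl⟩, .inr ⟨j, hadj, rfl⟩]

/-- On the edges of `C₄` this is the coloring by the two perfect matchings `{01, 23}` and
`{12, 30}`. -/
def layerColor (i j : Fin 4) : Fin 2 :=
  if i + j = 1 then 0 else 1

theorem layerColor_comm (i j : Fin 4) : layerColor i j = layerColor j i := by
  rw [layerColor, layerColor, add_comm]

theorem layerColor_ne : ∀ {i j k : Fin 4}, (cycleGraph 4).Adj i j → (cycleGraph 4).Adj i k →
    j ≠ k → layerColor i j ≠ layerColor i k := by
  decide

noncomputable def baseColoring (κ : Sym2 α → Fin Δ) : Sym2 (α × Fin 4) → Fin Δ ⊕ Fin 2 :=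
  Sym2.lift ⟨fun P Q => if P.1 = Q.1 then .inr (layerColor P.2 Q.2) else .inl (κ s(P.1, Q.1)),
    fun P Q => by simp only [eq_comm (a := P.1), layerColor_comm P.2, Sym2.eq_swap]⟩

theorem baseColoring_of_ne {u v : α} (h : u ≠ v) (i j : Fin 4) :
    baseColoring κ s((u, i), (v, j)) = .inl (κ s(u, v)) := by
  simp [baseColoring, h]

theorem baseColoring_self (u : α) (i j : Fin 4) :
    baseColoring κ s((u, i), (u, j)) = .inr (layerColor i j) := by
  simp [baseColoring]

theorem baseColoring_eq_inl {g : Sym2 (α × Fin 4)} (hg : g ∈ (G □ cycleGraph 4).edgeSet)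
    {u : α} {i : Fin 4} (hP : (u, i) ∈ g) {a : Fin Δ} (h : baseColoring κ g = .inl a) :
    ∃ y, G.Adj u y ∧ κ s(u, y) = a := by
  rcases exists_of_mem_edgeSet_boxProd hg hP with ⟨y, hy, rfl⟩ | ⟨j, -, rfl⟩
  · rw [baseColoring_of_ne hy.ne] at h
    exact ⟨y, hy, Sum.inl_injective h⟩
  · simp [baseColoring_self] at h

theorem properOn_baseColoring (hκ : ProperOn G.edgeSet κ) :
    ProperOn (G □ cycleGraph 4).edgeSet (baseColoring κ) := by
  rintro e he f hf hef ⟨⟨u, i⟩, hPe, hPf⟩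
  rcases exists_of_mem_edgeSet_boxProd he hPe with ⟨y, hy, rfl⟩ | ⟨j, hj, rfl⟩ <;>
    rcases exists_of_mem_edgeSet_boxProd hf hPf with ⟨y', hy', rfl⟩ | ⟨j', hj', rfl⟩
  · rw [baseColoring_of_ne hy.ne, baseColoring_of_ne hy'.ne, Ne, Sum.inl.injEq]
    refine hκ _ hy _ hy' (fun h => hef ?_) ⟨u, by simp, by simp⟩
    rcases Sym2.eq_iff.mp h with ⟨-, rfl⟩ | ⟨h₁, -⟩
    exacts [rfl, absurd h₁ hy'.ne]
  · simp [baseColoring_of_ne hy.ne, baseColoring_self]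
  · simp [baseColoring_of_ne hy'.ne, baseColoring_self]
  · rw [baseColoring_self, baseColoring_self, Ne, Sum.inr.injEq]
    exact layerColor_ne hj hj' (fun h => hef (by rw [h]))

/-- The edges hanging from the end `(u, i)` of a `G`-edge towards layer `i + 1` that the repair
of that edge may use besides the edges near it. -/
def Outer (G : SimpleGraph α) (u : α) (i : Fin 4) (g : Sym2 (α × Fin 4)) : Prop :=
  (∃ x, G.Adj u x ∧ g = s((x, i), (x, i + 1))) ∨ g = s((u, i + 1), (u, i + 2)) ∨
    ∃ y, G.Adj u y ∧ g = s((u, i + 1), (y, i + 1))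

/-- The edges that the repair of `e` may read or recolor. -/
def Zone (G : SimpleGraph α) (e g : Sym2 (α × Fin 4)) : Prop :=
  IsNear (G □ cycleGraph 4) e g ∨ ∃ u v i, e = s((u, i), (v, i)) ∧ Outer G u i g

theorem zone_self {e : Sym2 (α × Fin 4)} : Zone G e e :=
  .inl isNear_self

theorem Outer.exists_eq_mk {u : α} {i : Fin 4} {g : Sym2 (α × Fin 4)} (h : Outer G u i g) :
    ∃ P Q, g = s(P, Q) ∧ (G □ cycleGraph 4).Adj (u, i) P ∧
      (Q = (P.1, P.2 + 1) ∨ P = (u, i + 1) ∧ Q.2 = i + 1 ∧ G.Adj u Q.1) := by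
  rcases h with ⟨x, hx, rfl⟩ | rfl | ⟨y, hy, rfl⟩
  · exact ⟨_, _, rfl, boxProd_adj_left.mpr hx, .inl rfl⟩
  · exact ⟨_, _, rfl, boxProd_adj_right.mpr (cycleGraph_four_adj_add_one i),
      .inl (by simp [add_assoc])⟩
  · exact ⟨_, _, rfl, boxProd_adj_right.mpr (cycleGraph_four_adj_add_one i), .inr ⟨rfl, rfl, hy⟩⟩

theorem Zone.exists_isClose {e g : Sym2 (α × Fin 4)} (h : Zone G e g) :
    ∃ P ∈ g, IsClose (G □ cycleGraph 4) e P := by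
  rcases h with h | ⟨u, v, i, rfl, h⟩
  · induction g using Sym2.ind with
    | _ P Q => exact ⟨P, by simp, h P (by simp)⟩
  · obtain ⟨P, Q, rfl, hP, -⟩ := h.exists_eq_mk
    exact ⟨P, by simp, isClose_of_adj (by simp) hP⟩

/-- Seen from the same end `P`, a common outer edge puts `P` next to both `G`-edges. Seen from
opposite ends, the layer directions clash unless the edge lies in a layer for both; then its ends
are `(u, i + 1)` and `(u', i + 1)` with `u ~ u'`, and the two `G`-edges are adjacent. -/
theorem Outer.disjoint {u v u' v' : α} {i i' : Fin 4} {g : Sym2 (α × Fin 4)}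
    (hd : EdgeDistGE (G □ cycleGraph 4) s((u, i), (v, i)) s((u', i'), (v', i')) 3)
    (ho : Outer G u i g) (ho' : Outer G u' i' g) : False := by
  obtain ⟨P, Q, rfl, hP, hQ⟩ := ho.exists_eq_mk
  obtain ⟨P', Q', hPQ, hP', hQ'⟩ := ho'.exists_eq_mk
  rcases Sym2.eq_iff.mp hPQ with ⟨rfl, -⟩ | ⟨hPQ', hQP'⟩
  · exact not_edgeDistGE_three_of_isClose (isClose_of_adj (by simp) hP)
      (isClose_of_adj (by simp) hP') hd
  rcases hQ with hQ | ⟨hPu, hQ2, hQ1⟩ <;> rcases hQ' with hQ' | ⟨hP'u, hQ'2, -⟩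
  · have h₁ : P.2 = P'.2 + 1 := by rw [hPQ', hQ']
    have h₂ : P'.2 = P.2 + 1 := by rw [← hQP', hQ]
    exact (by decide : ∀ a b : Fin 4, a = b + 1 → b = a + 1 → False) _ _ h₁ h₂
  · have h₁ : P.2 = i' + 1 := by rw [hPQ', hQ'2]
    have h₂ : Q.2 = i' + 1 := by rw [hQP', hP'u]
    have h₃ : Q.2 = P.2 + 1 := by rw [hQ]
    exact (by decide : ∀ a b c : Fin 4, a = c + 1 → b = c + 1 → b = a + 1 → False) _ _ _ h₁ h₂ h₃
  · have h₁ : Q.2 = P.2 := by rw [hQ2, hPu]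
    have h₂ : P.2 = Q.2 + 1 := by rw [hPQ', hQ', hQP']
    exact (by decide : ∀ a b : Fin 4, b = a → a = b + 1 → False) _ _ h₁ h₂
  · have h₁ : Q = (u', i' + 1) := hQP'.trans hP'u
    obtain rfl : i' = i := add_right_cancel (by rw [← hQ2, h₁])
    exact not_edgeDistGE_three_of_isClose
      (isClose_of_adj (q := (u, i')) (P := (u', i')) (by simp)
        (boxProd_adj_left.mpr (show G.Adj u u' by simpa [h₁] using hQ1)))
      (isClose_of_mem (by simp)) hd

theorem Zone.disjoint {e e' g : Sym2 (α × Fin 4)} (hd : EdgeDistGE (G □ cycleGraph 4) e e' 3)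
    (h : Zone G e g) (h' : Zone G e' g) : False := by
  rcases h with h | ⟨u, v, i, rfl, ho⟩
  · obtain ⟨P, hP, hP'⟩ := h'.exists_isClose
    exact not_edgeDistGE_three_of_isClose (h P hP) hP' hd
  rcases h' with h' | ⟨u', v', i', rfl, ho'⟩
  · obtain ⟨P, hP, hP'⟩ := Zone.exists_isClose (.inr ⟨u, v, i, rfl, ho⟩)
    exact not_edgeDistGE_three_of_isClose hP' (h' P hP) hd
  exact ho.disjoint hd ho'

end BoxC4

section Repair

variable {α : Type*} {G : SimpleGraph α} {Δ : ℕ} {κ : Sym2 α → Fin Δ}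
  {c : Sym2 (α × Fin 4) → Fin Δ ⊕ Fin 2}

theorem cycle4Edges_subset_isNear {W : Type*} {H : SimpleGraph W} {e : Sym2 W} {x₁ x₂ x₃ x₄ : W}
    (h₁ : IsClose H e x₁) (h₂ : IsClose H e x₂) (h₃ : IsClose H e x₃) (h₄ : IsClose H e x₄) :
    cycle4Edges x₁ x₂ x₃ x₄ ⊆ {g | IsNear H e g} := by
  simp only [cycle4Edges, Set.insert_subset_iff, Set.singleton_subset_iff, Set.mem_ofPred_eq]
  exact ⟨isNear_mk h₁ h₂, isNear_mk h₂ h₃, isNear_mk h₃ h₄, isNear_mk h₄ h₁⟩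

/-- What giving the fiber edge `s((u, i), (u, i + 1))` the `G`-color `a` reads; `fiberWrites` is
what it may recolor. -/
def fiberReads (G : SimpleGraph α) (κ : Sym2 α → Fin Δ) (a : Fin Δ) (u : α) (i : Fin 4) :
    Set (Sym2 (α × Fin 4)) :=
  {g | (u, i) ∈ g ∨ (u, i + 1) ∈ g ∨ ∃ w, G.Adj u w ∧ κ s(u, w) = a ∧ g = s((w, i), (w, i + 1))}

def fiberWrites (G : SimpleGraph α) (κ : Sym2 α → Fin Δ) (a : Fin Δ) (u : α) (i : Fin 4) :
    Set (Sym2 (α × Fin 4)) :=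
  {g | g = s((u, i), (u, i + 1)) ∨
    ∃ w, G.Adj u w ∧ κ s(u, w) = a ∧ g ∈ cycle4Edges (u, i) (u, i + 1) (w, i + 1) (w, i)}

theorem fiberWrites_subset {a : Fin Δ} {u : α} {i : Fin 4} :
    fiberWrites G κ a u i ⊆ fiberReads G κ a u i ∩ (G □ cycleGraph 4).edgeSet := by
  have hi := cycleGraph_four_adj_add_one i
  rintro g (rfl | ⟨w, huw, hwa, hg⟩)
  · exact ⟨.inl (by simp), boxProd_adj_right.mpr hi⟩
  simp only [cycle4Edges, Set.mem_insert_iff, Set.mem_singleton_iff] at hg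
  rcases hg with rfl | rfl | rfl | rfl
  · exact ⟨.inl (by simp), boxProd_adj_right.mpr hi⟩
  · exact ⟨.inr (.inl (by simp)), boxProd_adj_left.mpr huw⟩
  · exact ⟨.inr (.inr ⟨w, huw, hwa, Sym2.eq_swap⟩), boxProd_adj_right.mpr hi.symm⟩
  · exact ⟨.inl (by simp), boxProd_adj_left.mpr huw.symm⟩

/-- To give the fiber edge at `u` the `G`-color `a`, swap the square over the `G`-edge at `u`
colored `a`, or recolor the fiber edge directly when there is no such edge. -/
theorem exists_recolor_fiber_inl (hc : ProperOn (G □ cycleGraph 4).edgeSet c) (a : Fin Δ)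
    (u : α) (i : Fin 4) (hbase : ∀ g ∈ (G □ cycleGraph 4).edgeSet, g ∈ fiberReads G κ a u i →
      c g = baseColoring κ g) :
    ∃ c', ProperOn (G □ cycleGraph 4).edgeSet c' ∧ c' s((u, i), (u, i + 1)) = .inl a ∧
      ∀ g ∉ fiberWrites G κ a u i, c' g = c g := by
  have hi := cycleGraph_four_adj_add_one i
  have he : s(((u, i) : α × Fin 4), (u, i + 1)) ∈ (G □ cycleGraph 4).edgeSet :=
    boxProd_adj_right.mpr hi
  by_cases hw : ∃ w, G.Adj u w ∧ κ s(u, w) = a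
  · obtain ⟨w, huw, rfl⟩ := hw
    have e₂ : s(((u, i + 1) : α × Fin 4), (w, i + 1)) ∈ (G □ cycleGraph 4).edgeSet :=
      boxProd_adj_left.mpr huw
    have e₃ : s(((w, i + 1) : α × Fin 4), (w, i)) ∈ (G □ cycleGraph 4).edgeSet :=
      boxProd_adj_right.mpr hi.symm
    have e₄ : s(((w, i) : α × Fin 4), (u, i)) ∈ (G □ cycleGraph 4).edgeSet :=
      boxProd_adj_left.mpr huw.symm
    obtain ⟨c', hc', hc'e, hc'c⟩ := hc.exists_swap_cycle4 he e₂ e₃ e₄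
      (by rw [hbase _ he (.inl (by simp)), baseColoring_self])
      (by rw [hbase _ e₂ (.inr (.inl (by simp))), baseColoring_of_ne huw.ne])
      (by rw [hbase _ e₃ (.inr (.inr ⟨w, huw, rfl, Sym2.eq_swap⟩)), baseColoring_self,
        layerColor_comm])
      (by rw [hbase _ e₄ (.inl (by simp)), baseColoring_of_ne huw.ne.symm, Sym2.eq_swap])
    exact ⟨c', hc', hc'e, fun g hg => hc'c g fun hg' => hg (.inr ⟨w, huw, rfl, hg'⟩)⟩
  push Not at hw
  have hmiss : ∀ j, (j = i ∨ j = i + 1) → IsMissingAt ((G □ cycleGraph 4).edgeSet \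
      {s((u, i), (u, i + 1))}) c (.inl a) (u, j) := by
    rintro j hj f ⟨hf, -⟩ hjf hfa
    rw [hbase f hf (by rcases hj with rfl | rfl; exacts [.inl hjf, .inr (.inl hjf)])] at hfa
    obtain ⟨y, hy, hya⟩ := baseColoring_eq_inl hf hjf hfa
    exact hw y hy hya
  have := (hc.mono Set.sdiff_subset).update (hmiss i (.inl rfl)) (hmiss (i + 1) (.inr rfl))
  rw [Set.insert_sdiff_singleton, Set.insert_eq_of_mem he] at this
  exact ⟨_, this, Function.update_self .., fun g hg =>
    Function.update_of_ne (fun h => hg (.inl h)) ..⟩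

theorem fiberReads_subset_isNear {a : Fin Δ} {u : α} {i : Fin 4} :
    fiberReads G κ a u i ∩ (G □ cycleGraph 4).edgeSet ⊆
      {g | IsNear (G □ cycleGraph 4) s((u, i), (u, i + 1)) g} := by
  rintro g ⟨hg | hg | ⟨w, huw, -, rfl⟩, hgE⟩
  · exact isNear_of_mem_edgeSet hgE hg (by simp)
  · exact isNear_of_mem_edgeSet hgE hg (by simp)
  · exact isNear_mk (isClose_of_adj (q := (u, i)) (by simp) (boxProd_adj_left.mpr huw))
      (isClose_of_adj (q := (u, i + 1)) (by simp) (boxProd_adj_left.mpr huw))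

theorem fiberReads_subset_zone {a : Fin Δ} {u : α} {i : Fin 4} (v : α) :
    fiberReads G κ a u i ∩ (G □ cycleGraph 4).edgeSet ⊆ {g | Zone G s((u, i), (v, i)) g} := by
  rintro g ⟨hg | hg | ⟨w, huw, -, rfl⟩, hgE⟩
  · exact .inl (isNear_of_mem_edgeSet hgE hg (by simp))
  · rcases exists_of_mem_edgeSet_boxProd hgE hg with ⟨y, hy, rfl⟩ | ⟨j, hj, rfl⟩
    · exact .inr ⟨u, v, i, rfl, .inr (.inr ⟨y, hy, rfl⟩)⟩
    obtain rfl | rfl : j = i ∨ j = i + 2 :=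
      (by decide : ∀ i j : Fin 4, (cycleGraph 4).Adj (i + 1) j → j = i ∨ j = i + 2) i j hj
    · exact .inl (isNear_of_mem_edgeSet hgE (Sym2.mem_mk_right _ _) (Sym2.mem_mk_left _ _))
    · exact .inr ⟨u, v, i, rfl, .inr (.inl rfl)⟩
  · exact .inr ⟨u, v, i, rfl, .inl ⟨w, huw, rfl⟩⟩

/-- The fiber recoloring at `u` stays in the columns of `u` and of a neighbor `w` with
`κ s(u, w) = a`, none of which is `v` or a neighbor of `v` with `κ`-color `a`. -/
theorem fiberWrites_disjoint (hκ : ProperOn G.edgeSet κ) {u v : α} (huv : G.Adj u v)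
    {a : Fin Δ} (ha : κ s(u, v) ≠ a) {i : Fin 4} {g : Sym2 (α × Fin 4)}
    (hg : g ∈ fiberWrites G κ a u i) : g ∉ fiberReads G κ a v i := by
  obtain ⟨w, hw, hcol⟩ : ∃ w, (w = u ∨ G.Adj u w ∧ κ s(u, w) = a) ∧
      ∀ P ∈ g, P.1 = u ∨ P.1 = w := by
    rcases hg with rfl | ⟨w, huw, hwa, hg⟩
    · exact ⟨u, .inl rfl, by simp⟩
    refine ⟨w, .inr ⟨huw, hwa⟩, ?_⟩
    simp only [cycle4Edges, Set.mem_insert_iff, Set.mem_singleton_iff] at hg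
    rcases hg with rfl | rfl | rfl | rfl <;> simp
  have hwv : w ≠ v := by
    rintro rfl
    rcases hw with rfl | ⟨-, hwa⟩
    exacts [huv.ne rfl, ha hwa]
  have hnv : ∀ P ∈ g, P.1 ≠ v := fun P hP h => by
    rcases hcol P hP with h' | h'
    exacts [huv.ne (h'.symm.trans h), hwv (h'.symm.trans h)]
  rintro (h | h | ⟨z, hvz, hza, rfl⟩)
  · exact hnv _ h rfl
  · exact hnv _ h rfl
  have hz : z = u ∨ z = w := hcol (z, i) (by simp)
  rcases hz with rfl | rfl
  · exact ha (by rwa [Sym2.eq_swap])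
  rcases hw with rfl | ⟨huz, hza'⟩
  · exact ha (by rwa [Sym2.eq_swap])
  refine hκ _ huz _ hvz (fun h => huv.ne ?_) ⟨_, Sym2.mem_mk_right _ _, Sym2.mem_mk_right _ _⟩
    (hza'.trans hza.symm)
  rcases Sym2.eq_iff.mp h with ⟨h, -⟩ | ⟨h, -⟩
  exacts [h, absurd h huz.ne]

theorem exists_repair_fiber (hc : ProperOn (G □ cycleGraph 4).edgeSet c) (u : α) (i : Fin 4)
    (t : Fin Δ ⊕ Fin 2) (hbase : ∀ g ∈ (G □ cycleGraph 4).edgeSet,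
      IsNear (G □ cycleGraph 4) s((u, i), (u, i + 1)) g → c g = baseColoring κ g) :
    ∃ c', ProperOn (G □ cycleGraph 4).edgeSet c' ∧ c' s((u, i), (u, i + 1)) = t ∧
      ∀ g, ¬ IsNear (G □ cycleGraph 4) s((u, i), (u, i + 1)) g → c' g = c g := by
  rcases t with a | b
  · obtain ⟨c', hc', hc'e, hc'c⟩ := exists_recolor_fiber_inl hc a u i
      fun g hg hr => hbase g hg (fiberReads_subset_isNear ⟨hr, hg⟩)
    exact ⟨c', hc', hc'e, fun g hg => hc'c g fun hw => hg (fiberReads_subset_isNear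
      (fiberWrites_subset hw))⟩
  obtain ⟨h₂, h₃, h₄⟩ : (cycleGraph 4).Adj (i + 1) (i + 2) ∧ (cycleGraph 4).Adj (i + 2) (i + 3) ∧
      (cycleGraph 4).Adj (i + 3) i :=
    (by decide : ∀ j : Fin 4, (cycleGraph 4).Adj (j + 1) (j + 2) ∧
      (cycleGraph 4).Adj (j + 2) (j + 3) ∧ (cycleGraph 4).Adj (j + 3) j) i
  have e₁ : (G □ cycleGraph 4).Adj (u, i) (u, i + 1) :=
    boxProd_adj_right.mpr (cycleGraph_four_adj_add_one i)
  have e₂ : (G □ cycleGraph 4).Adj (u, i + 1) (u, i + 2) := boxProd_adj_right.mpr h₂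
  have e₃ : (G □ cycleGraph 4).Adj (u, i + 2) (u, i + 3) := boxProd_adj_right.mpr h₃
  have e₄ : (G □ cycleGraph 4).Adj (u, i + 3) (u, i) := boxProd_adj_right.mpr h₄
  have hnear : cycle4Edges (u, i) (u, i + 1) (u, i + 2) (u, i + 3) ⊆
      {g | IsNear (G □ cycleGraph 4) s((u, i), (u, i + 1)) g} :=
    cycle4Edges_subset_isNear (isClose_of_mem (by simp)) (isClose_of_mem (by simp))
      (isClose_of_adj (by simp) e₂) (isClose_of_adj (by simp) e₄.symm)
  have hc_eq : ∀ j k, s(((u, j) : α × Fin 4), (u, k)) ∈ cycle4Edges (u, i) (u, i + 1) (u, i + 2)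
      (u, i + 3) → s((u, j), (u, k)) ∈ (G □ cycleGraph 4).edgeSet →
      c s((u, j), (u, k)) = .inr (layerColor j k) := fun j k hjk he => by
    rw [hbase _ he (hnear hjk), baseColoring_self]
  obtain rfl | rfl : b = layerColor i (i + 1) ∨ b = layerColor (i + 1) (i + 2) :=
    (by decide : ∀ (j : Fin 4) (b : Fin 2), b = layerColor j (j + 1) ∨
      b = layerColor (j + 1) (j + 2)) i b
  · exact ⟨c, hc, hc_eq i (i + 1) (by simp [cycle4Edges]) e₁, fun _ _ => rfl⟩
  obtain ⟨c', hc', hc'e, hc'c⟩ := hc.exists_swap_cycle4 e₁ e₂ e₃ e₄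
    (hc_eq _ _ (by simp [cycle4Edges]) e₁) (hc_eq _ _ (by simp [cycle4Edges]) e₂)
    ((hc_eq _ _ (by simp [cycle4Edges]) e₃).trans (congrArg Sum.inr ((by decide :
      ∀ j : Fin 4, layerColor (j + 2) (j + 3) = layerColor j (j + 1)) i)))
    ((hc_eq _ _ (by simp [cycle4Edges]) e₄).trans (congrArg Sum.inr ((by decide :
      ∀ j : Fin 4, layerColor (j + 3) j = layerColor (j + 1) (j + 2)) i)))
  exact ⟨c', hc', hc'e, fun g hg => hc'c g fun hg' => hg (hnear hg')⟩

theorem square_subset_isNear {u v : α} {i j : Fin 4} (hij : (cycleGraph 4).Adj i j) :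
    cycle4Edges (u, i) (v, i) (v, j) (u, j) ⊆
      {g | IsNear (G □ cycleGraph 4) s((u, i), (v, i)) g} :=
  cycle4Edges_subset_isNear (isClose_of_mem (by simp)) (isClose_of_mem (by simp))
    (isClose_of_adj (q := (v, i)) (by simp) (boxProd_adj_right.mpr hij))
    (isClose_of_adj (q := (u, i)) (by simp) (boxProd_adj_right.mpr hij))

/-- Recolor the fiber edges at `u` and at `v` with `a`; then the square over `s(u, v)` between
layers `i` and `i + 1` alternates `κ s(u, v)` and `a`, and swapping it finishes. -/
theorem exists_recolor_layer_inl (hκ : ProperOn G.edgeSet κ)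
    (hc : ProperOn (G □ cycleGraph 4).edgeSet c) {u v : α} (huv : G.Adj u v) (i : Fin 4)
    {a : Fin Δ} (ha : κ s(u, v) ≠ a) (hbase : ∀ g ∈ (G □ cycleGraph 4).edgeSet,
      g ∈ fiberReads G κ a u i ∨ g ∈ fiberReads G κ a v i → c g = baseColoring κ g) :
    ∃ c', ProperOn (G □ cycleGraph 4).edgeSet c' ∧ c' s((u, i), (v, i)) = .inl a ∧
      ∀ g ∉ fiberWrites G κ a u i, g ∉ fiberWrites G κ a v i →
        g ∉ cycle4Edges (u, i) (v, i) (v, i + 1) (u, i + 1) → c' g = c g := by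
  have ha' : κ s(v, u) ≠ a := by rwa [Sym2.eq_swap]
  obtain ⟨c₁, hc₁, hc₁u, hc₁c⟩ := exists_recolor_fiber_inl hc a u i
    fun g hg hr => hbase g hg (.inl hr)
  obtain ⟨c₂, hc₂, hc₂v, hc₂c⟩ := exists_recolor_fiber_inl hc₁ a v i fun g hg hr =>
    (hc₁c g fun hw => fiberWrites_disjoint hκ huv ha hw hr).trans (hbase g hg (.inr hr))
  have hc₂u : ∀ g ∈ fiberReads G κ a u i, c₂ g = c₁ g :=
    fun g hg => hc₂c g fun hw => fiberWrites_disjoint hκ huv.symm ha' hw hg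
  have hhoriz : ∀ j, (j = i ∨ j = i + 1) → c₂ s((u, j), (v, j)) = .inl (κ s(u, v)) := by
    intro j hj
    have hu : s(((u, j) : α × Fin 4), (v, j)) ∈ fiberReads G κ a u i := by
      rcases hj with rfl | rfl <;> simp [fiberReads]
    have hv : s(((u, j) : α × Fin 4), (v, j)) ∈ fiberReads G κ a v i := by
      rcases hj with rfl | rfl <;> simp [fiberReads]
    rw [hc₂u _ hu, hc₁c _ fun hw => fiberWrites_disjoint hκ huv ha hw hv,
      hbase _ (boxProd_adj_left.mpr huv) (.inl hu), baseColoring_of_ne huv.ne]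
  have hi := cycleGraph_four_adj_add_one i
  obtain ⟨c₃, hc₃, hc₃e, hc₃c⟩ := hc₂.exists_swap_cycle4 (boxProd_adj_left.mpr huv)
    (boxProd_adj_right.mpr hi) (boxProd_adj_left.mpr huv.symm) (boxProd_adj_right.mpr hi.symm)
    (hhoriz i (.inl rfl)) hc₂v (by rw [Sym2.eq_swap]; exact hhoriz (i + 1) (.inr rfl))
    (by rw [Sym2.eq_swap, hc₂u _ (.inl (by simp)), hc₁u])
  refine ⟨c₃, hc₃, hc₃e, fun g hu hv hsq => ?_⟩
  rw [hc₃c g hsq, hc₂c g hv, hc₁c g hu]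

theorem exists_recolor_layer_inr (hc : ProperOn (G □ cycleGraph 4).edgeSet c) {u v : α}
    (huv : G.Adj u v) (i : Fin 4) (b : Fin 2) (hbase : ∀ g ∈ (G □ cycleGraph 4).edgeSet,
      IsNear (G □ cycleGraph 4) s((u, i), (v, i)) g → c g = baseColoring κ g) :
    ∃ c', ProperOn (G □ cycleGraph 4).edgeSet c' ∧ c' s((u, i), (v, i)) = .inr b ∧
      ∀ g, ¬ IsNear (G □ cycleGraph 4) s((u, i), (v, i)) g → c' g = c g := by
  obtain ⟨j, hij, rfl⟩ : ∃ j, (cycleGraph 4).Adj i j ∧ layerColor i j = b :=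
    (by decide : ∀ (i : Fin 4) (b : Fin 2), ∃ j, (cycleGraph 4).Adj i j ∧ layerColor i j = b) i b
  have hsq := square_subset_isNear (G := G) (u := u) (v := v) hij
  have e₁ : s(((u, i) : α × Fin 4), (v, i)) ∈ (G □ cycleGraph 4).edgeSet :=
    boxProd_adj_left.mpr huv
  have e₂ : s(((v, i) : α × Fin 4), (v, j)) ∈ (G □ cycleGraph 4).edgeSet :=
    boxProd_adj_right.mpr hij
  have e₃ : s(((v, j) : α × Fin 4), (u, j)) ∈ (G □ cycleGraph 4).edgeSet :=
    boxProd_adj_left.mpr huv.symm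
  have e₄ : s(((u, j) : α × Fin 4), (u, i)) ∈ (G □ cycleGraph 4).edgeSet :=
    boxProd_adj_right.mpr hij.symm
  obtain ⟨c', hc', hc'e, hc'c⟩ := hc.exists_swap_cycle4 e₁ e₂ e₃ e₄
    (by rw [hbase _ e₁ isNear_self, baseColoring_of_ne huv.ne])
    (by rw [hbase _ e₂ (hsq (by simp [cycle4Edges])), baseColoring_self])
    (by rw [hbase _ e₃ (hsq (by simp [cycle4Edges])), baseColoring_of_ne huv.ne.symm,
      Sym2.eq_swap])
    (by rw [hbase _ e₄ (hsq (by simp [cycle4Edges])), baseColoring_self, layerColor_comm])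
  exact ⟨c', hc', hc'e, fun g hg => hc'c g fun hg' => hg (hsq hg')⟩

theorem exists_repair_layer (hκ : ProperOn G.edgeSet κ)
    (hc : ProperOn (G □ cycleGraph 4).edgeSet c) {u v : α} (huv : G.Adj u v) (i : Fin 4)
    (t : Fin Δ ⊕ Fin 2) (hbase : ∀ g ∈ (G □ cycleGraph 4).edgeSet,
      Zone G s((u, i), (v, i)) g → c g = baseColoring κ g) :
    ∃ c', ProperOn (G □ cycleGraph 4).edgeSet c' ∧ c' s((u, i), (v, i)) = t ∧
      ∀ g, ¬ Zone G s((u, i), (v, i)) g → c' g = c g := by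
  have he : s(((u, i) : α × Fin 4), (v, i)) ∈ (G □ cycleGraph 4).edgeSet :=
    boxProd_adj_left.mpr huv
  have hce : c s((u, i), (v, i)) = .inl (κ s(u, v)) := by
    rw [hbase _ he zone_self, baseColoring_of_ne huv.ne]
  rcases t with a | b
  · by_cases ha : κ s(u, v) = a
    · exact ⟨c, hc, ha ▸ hce, fun _ _ => rfl⟩
    have hu : ∀ g ∈ fiberReads G κ a u i ∩ (G □ cycleGraph 4).edgeSet,
        Zone G s((u, i), (v, i)) g := fun g hg => fiberReads_subset_zone v hg
    have hv : ∀ g ∈ fiberReads G κ a v i ∩ (G □ cycleGraph 4).edgeSet,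
        Zone G s((u, i), (v, i)) g := fun g hg => by
      rw [Sym2.eq_swap]
      exact fiberReads_subset_zone u hg
    obtain ⟨c', hc', hc'e, hc'c⟩ := exists_recolor_layer_inl hκ hc huv i ha
      fun g hg hr => hbase g hg (hr.elim (fun h => hu g ⟨h, hg⟩) (fun h => hv g ⟨h, hg⟩))
    refine ⟨c', hc', hc'e, fun g hg => hc'c g ?_ ?_ ?_⟩
    · exact fun hw => hg (hu g (fiberWrites_subset hw))
    · exact fun hw => hg (hv g (fiberWrites_subset hw))
    · exact fun hsq => hg (.inl (square_subset_isNear (cycleGraph_four_adj_add_one i) hsq))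
  obtain ⟨c', hc', hc'e, hc'c⟩ := exists_recolor_layer_inr hc huv i b
    fun g hg hn => hbase g hg (.inl hn)
  exact ⟨c', hc', hc'e, fun g hg => hc'c g fun hn => hg (.inl hn)⟩

theorem exists_repair (hκ : ProperOn G.edgeSet κ) (hc : ProperOn (G □ cycleGraph 4).edgeSet c)
    {e : Sym2 (α × Fin 4)} (he : e ∈ (G □ cycleGraph 4).edgeSet) (t : Fin Δ ⊕ Fin 2)
    (hbase : ∀ g, Zone G e g → c g = baseColoring κ g) :
    ∃ c', ProperOn (G □ cycleGraph 4).edgeSet c' ∧ c' e = t ∧ ∀ g, ¬ Zone G e g → c' g = c g := by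
  induction e using Sym2.ind with
  | _ P Q =>
  obtain ⟨u, i⟩ := P
  rcases exists_of_mem_edgeSet_boxProd he (Sym2.mem_mk_left _ _) with ⟨v, huv, h⟩ | ⟨j, hij, h⟩
  · rw [h] at hbase ⊢
    exact exists_repair_layer hκ hc huv i t fun g _ hg => hbase g hg
  obtain rfl | rfl : j = i + 1 ∨ i = j + 1 :=
    (by decide : ∀ i j : Fin 4, (cycleGraph 4).Adj i j → j = i + 1 ∨ i = j + 1) i j hij
  · rw [h] at hbase ⊢
    obtain ⟨c', hc', hc'e, hc'c⟩ := exists_repair_fiber hc u i t fun g _ hg => hbase g (.inl hg)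
    exact ⟨c', hc', hc'e, fun g hg => hc'c g fun hn => hg (.inl hn)⟩
  · rw [h, Sym2.eq_swap] at hbase ⊢
    obtain ⟨c', hc', hc'e, hc'c⟩ := exists_repair_fiber hc u j t fun g _ hg => hbase g (.inl hg)
    exact ⟨c', hc', hc'e, fun g hg => hc'c g fun hn => hg (.inl hn)⟩

end Repair

/-- A distance-3 precoloring of `G □ C₄` (`G` bipartite, `Δ(G) ≥ 1`) with
at most `Δ(G) + 2` colors is extendable to a proper `(Δ(G)+2)`-edge coloring. -/
theorem extend_distance3_bipartite_times_C4 {α : Type*} [Fintype α]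
    (G : SimpleGraph α) (hbip : G.Colorable 2) (hΔ : 1 ≤ G.maxDegree)
    (E₀ : Set (Sym2 (α × Fin 4)))
    (φ : Sym2 (α × Fin 4) → Fin (G.maxDegree + 2))
    (hφ : IsProperEdgeColoringOn (G □ cycleGraph 4) E₀ φ)
    (hdist : ∀ e ∈ E₀, ∀ f ∈ E₀, e ≠ f → EdgeDistGE (G □ cycleGraph 4) e f 3) :
    ∃ c : Sym2 (α × Fin 4) → Fin (G.maxDegree + 2),
      IsProperEdgeColoring (G □ cycleGraph 4) c ∧ ∀ e ∈ E₀, c e = φ e := by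
  have : Nonempty (Fin G.maxDegree) := ⟨⟨0, hΔ⟩⟩
  obtain ⟨κ, hκ⟩ := exists_properOn_edgeSet_of_colorable_two (β := Fin G.maxDegree) hbip
    (by simpa using G.degree_le_maxDegree)
  obtain ⟨c, hc, hcφ⟩ := exists_of_local_repairs (ProperOn (G □ cycleGraph 4).edgeSet)
    (properOn_baseColoring hκ) E₀.toFinite (finSumFinEquiv.symm ∘ φ) (Zone G)
    (fun _ _ => zone_self)
    (fun e he e' he' hne g h h' => Zone.disjoint (hdist e he e' he' hne) h h')
    fun e he c hc hbase => exists_repair hκ hc (hφ.1 he) _ hbase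
  exact ⟨finSumFinEquiv ∘ c, hc.comp finSumFinEquiv.injective, fun e he => by simp [hcφ e he]⟩
end

section
/- Let G and H be Class 1 simple graphs, each with at least one edge, with maximum degrees Δ(G) and Δ(H). Let φ be a partial proper edge coloring of the Cartesian product G □ H defined on a set E₀ of edges using at most Δ(G) + Δ(H) colors, such that any two distinct edges of E₀ are at distance at least 4 in G □ H. Then φ extends to a proper edge coloring of G □ H using Δ(G) + Δ(H) colors. -/
open SimpleGraph
open scoped Classical

/-!
Colour `G □ H` by the product colouring: each copy of an edge of `G` keeps its colour in a
`Δ(G)`-edge-colouring of `G`, each copy of an edge of `H` its colour in a `Δ(H)`-edge-colouring of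
`H`, taken from a disjoint palette. Exchanging two colours on all edges inside a vertex set that is
closed under edges of these two colours (a Kempe swap) keeps a colouring proper, and in the product
colouring such sets are easy to find: products `A ×ˢ B` of a set closed under one colour of `G` and
a set closed under one colour of `H`. One or two Kempe swaps on such sets next to a precoloured
edge `e` give `e` its prescribed colour. They only recolour edges with an end at distance at most
`1` from `e` and both ends at distance at most `2`, and at distance `2` they only permute the
colours present at a vertex. So the recolourings around two precoloured edges at distance at least
`4` never conflict and can all be applied at once.
-/

section EdgeColorings

variable {V W C C' : Type*} {K : SimpleGraph V} {K' : SimpleGraph W}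

/-- Properness in vertex form, for colours in an arbitrary type. -/
def IsProperEdgeColorMap (K : SimpleGraph V) (c : Sym2 V → C) : Prop :=
  ∀ ⦃w u v⦄, K.Adj w u → K.Adj w v → u ≠ v → c s(w, u) ≠ c s(w, v)

theorem isProperEdgeColoring_iff_s11 {n : ℕ} {c : Sym2 V → Fin n} :
    IsProperEdgeColoring K c ↔ IsProperEdgeColorMap K c := by
  constructor
  · intro hc w u v hu hv huv
    exact hc _ hu _ hv (mt Sym2.congr_right.mp huv) ⟨w, Sym2.mem_mk_left _ _, Sym2.mem_mk_left _ _⟩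
  · rintro hc e he f hf hef ⟨w, hwe, hwf⟩
    obtain ⟨u, rfl⟩ := Sym2.mem_iff_exists.mp hwe
    obtain ⟨v, rfl⟩ := Sym2.mem_iff_exists.mp hwf
    exact hc he hf fun huv => hef (huv ▸ rfl)

theorem IsProperEdgeColorMap.eq_of_eq {c : Sym2 V → C} (hc : IsProperEdgeColorMap K c)
    {w u v : V} (hu : K.Adj w u) (hv : K.Adj w v) (h : c s(w, u) = c s(w, v)) : u = v :=
  not_not.mp fun huv => hc hu hv huv h

theorem IsProperEdgeColorMap.comp {c : Sym2 V → C} {π : C → C'} (hc : IsProperEdgeColorMap K c)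
    (hπ : Function.Injective π) : IsProperEdgeColorMap K (π ∘ c) :=
  fun _ _ _ hu hv huv h => hc hu hv huv (hπ h)

theorem IsProperEdgeColorMap.comap {c : Sym2 W → C} (hc : IsProperEdgeColorMap K' c)
    (i : K ≃g K') : IsProperEdgeColorMap K (c ∘ Sym2.map i) :=
  fun _ _ _ hu hv huv => hc (i.map_adj_iff.mpr hu) (i.map_adj_iff.mpr hv) (i.injective.ne huv)

theorem IsClassOne.exists_isProperEdgeColorMap [Fintype V] (hK : IsClassOne K) :
    ∃ c : Sym2 V → Fin K.maxDegree, IsProperEdgeColorMap K c := by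
  have hne : {n | ∃ c : Sym2 V → Fin n, IsProperEdgeColoring K c}.Nonempty :=
    ⟨_, Fintype.equivFin (Sym2 V), fun _ _ _ _ hef _ h => hef ((Fintype.equivFin _).injective h)⟩
  obtain ⟨c, hc⟩ : ∃ c : Sym2 V → Fin K.maxDegree, IsProperEdgeColoring K c := by
    rw [← hK]
    exact Nat.sInf_mem hne
  exact ⟨c, isProperEdgeColoring_iff_s11.mp hc⟩

end EdgeColorings

theorem maxDegree_pos_of_edgeSet_nonempty {V : Type*} [Fintype V] {G : SimpleGraph V}
    [DecidableRel G.Adj] (hG : G.edgeSet.Nonempty) : 0 < G.maxDegree :=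
  Nat.pos_of_ne_zero (mt maxDegree_eq_zero_iff.mp (edgeSet_nonempty.mp hG))

theorem SimpleGraph.Hom.edist_le {V W : Type*} {K : SimpleGraph V} {K' : SimpleGraph W}
    (f : K →g K') (u v : V) : K'.edist (f u) (f v) ≤ K.edist u v := by
  by_cases h : K.Reachable u v
  · obtain ⟨p, hp⟩ := h.exists_walk_length_eq_edist
    rw [← hp, ← Walk.length_map f p]
    exact SimpleGraph.edist_le _
  · rw [edist_eq_top_of_not_reachable h]
    exact le_top

theorem SimpleGraph.Iso.edist_eq {V W : Type*} {K : SimpleGraph V} {K' : SimpleGraph W}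
    (f : K ≃g K') (u v : V) : K'.edist (f u) (f v) = K.edist u v :=
  le_antisymm (f.toHom.edist_le u v) (by simpa using f.symm.toHom.edist_le (f u) (f v))

section NearEdge

variable {V W : Type*} {K : SimpleGraph V} {K' : SimpleGraph W} {e : Sym2 V}

def NearEdge (K : SimpleGraph V) (e : Sym2 V) (r : ℕ) (w : V) : Prop :=
  ∃ x ∈ e, K.edist x w ≤ r

theorem nearEdge_of_mem {w : V} (hw : w ∈ e) (r : ℕ) : NearEdge K e r w :=
  ⟨w, hw, by simp⟩

theorem NearEdge.mono {w : V} {r s : ℕ} (h : NearEdge K e r w) (hrs : r ≤ s) :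
    NearEdge K e s w :=
  let ⟨x, hx, hxw⟩ := h
  ⟨x, hx, hxw.trans (by exact_mod_cast hrs)⟩

theorem NearEdge.of_adj {u v : V} {r : ℕ} (h : NearEdge K e r u) (huv : K.Adj u v) :
    NearEdge K e (r + 1) v := by
  obtain ⟨x, hx, hxu⟩ := h
  refine ⟨x, hx, ?_⟩
  calc K.edist x v ≤ K.edist x u + K.edist u v := K.edist_triangle
    _ ≤ r + 1 := by rw [edist_eq_one_iff_adj.mpr huv]; gcongr

theorem nearEdge_map_iff (i : K ≃g K') {r : ℕ} {w : V} :
    NearEdge K' (e.map i) r (i w) ↔ NearEdge K e r w := by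
  constructor
  · rintro ⟨_, hix, hxw⟩
    obtain ⟨x, hx, rfl⟩ := Sym2.mem_map.mp hix
    exact ⟨x, hx, i.edist_eq x w ▸ hxw⟩
  · rintro ⟨x, hx, hxw⟩
    exact ⟨i x, Sym2.mem_map.mpr ⟨x, hx, rfl⟩, (i.edist_eq x w).symm ▸ hxw⟩

theorem EdgeDistGE.symm {f : Sym2 V} {k : ℕ} (h : EdgeDistGE K e f k) : EdgeDistGE K f e k :=
  fun y hy x hx => edist_comm (G := K) ▸ h x hx y hy

theorem EdgeDistGE.not_nearEdge {f : Sym2 V} {w : V} (h : EdgeDistGE K e f 4)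
    (he : NearEdge K e 1 w) (hf : NearEdge K f 2 w) : False := by
  obtain ⟨x, hx, hxw⟩ := he
  obtain ⟨y, hy, hyw⟩ := hf
  have : K.edist x y ≤ 3 :=
    calc K.edist x y ≤ K.edist x w + K.edist w y := K.edist_triangle
      _ ≤ 1 + 2 := add_le_add hxw (edist_comm (G := K) ▸ hyw)
      _ = 3 := rfl
  exact absurd (h x hx y hy) (not_le.mpr (this.trans_lt (by decide)))

end NearEdge

section LocalRecoloring

variable {V W C C' : Type*} {K : SimpleGraph V} {K' : SimpleGraph W} {e f : Sym2 V}

/-- The second clause is what lets recolourings around two edges at distance `4` meet at a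
vertex without clashing. -/
structure IsLocalRecoloring (K : SimpleGraph V) (e : Sym2 V) (c₀ c : Sym2 V → C) : Prop where
  nearEdge_of_ne : ∀ ⦃u v⦄, K.Adj u v → c s(u, v) ≠ c₀ s(u, v) →
    (NearEdge K e 1 u ∨ NearEdge K e 1 v) ∧ NearEdge K e 2 u ∧ NearEdge K e 2 v
  exists_eq_of_far : ∀ ⦃u v⦄, ¬ NearEdge K e 1 u → K.Adj u v →
    ∃ w, K.Adj u w ∧ c₀ s(u, w) = c s(u, v)

namespace IsLocalRecoloring

variable {c₀ c c' c₁ c₂ : Sym2 V → C}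

theorem refl : IsLocalRecoloring K e c₀ c₀ :=
  ⟨fun _ _ _ h => absurd rfl h, fun _ v _ huv => ⟨v, huv, rfl⟩⟩

theorem trans (h₁ : IsLocalRecoloring K e c₀ c₁) (h₂ : IsLocalRecoloring K e c₁ c₂) :
    IsLocalRecoloring K e c₀ c₂ where
  nearEdge_of_ne u v huv hne := by
    by_cases h : c₂ s(u, v) = c₁ s(u, v)
    · exact h₁.nearEdge_of_ne huv (h ▸ hne)
    · exact h₂.nearEdge_of_ne huv h
  exists_eq_of_far u v hu huv := by
    obtain ⟨w, huw, hw⟩ := h₂.exists_eq_of_far hu huv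
    obtain ⟨w', huw', hw'⟩ := h₁.exists_eq_of_far hu huw
    exact ⟨w', huw', hw'.trans hw⟩

theorem of_iso {c₀' c' : Sym2 W → C} {π : C → C'} (i : K ≃g K') {c₀ : Sym2 V → C'}
    (hc₀ : ∀ ⦃u v⦄, K.Adj u v → c₀ s(u, v) = π (c₀' s(i u, i v)))
    (h : IsLocalRecoloring K' (e.map i) c₀' c') :
    IsLocalRecoloring K e c₀ (π ∘ c' ∘ Sym2.map i) where
  nearEdge_of_ne u v huv hne := by
    rw [hc₀ huv] at hne
    simpa only [nearEdge_map_iff] using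
      h.nearEdge_of_ne (i.map_adj_iff.mpr huv) fun h' => hne (congrArg π h')
  exists_eq_of_far u v hu huv := by
    obtain ⟨w, huw, hw⟩ :=
      h.exists_eq_of_far (mt (nearEdge_map_iff i).mp hu) (i.map_adj_iff.mpr huv)
    have huw' : K.Adj u (i.symm w) := by simpa using i.symm.map_adj_iff.mpr huw
    exact ⟨i.symm w, huw', by simp [hc₀ huw', hw]⟩

theorem apply_eq_of_nearEdge (hf : IsLocalRecoloring K f c₀ c) (hef : EdgeDistGE K e f 4)
    {u v : V} (huv : K.Adj u v) (he : NearEdge K e 1 u ∨ NearEdge K e 1 v) :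
    c s(u, v) = c₀ s(u, v) := by
  by_contra hne
  obtain ⟨-, hu, hv⟩ := hf.nearEdge_of_ne huv hne
  exact he.elim (hef.not_nearEdge · hu) (hef.not_nearEdge · hv)

theorem ne_of_ne (hc₀ : IsProperEdgeColorMap K c₀) (hc : IsProperEdgeColorMap K c)
    (hc' : IsProperEdgeColorMap K c') (he : IsLocalRecoloring K e c₀ c)
    (hf : IsLocalRecoloring K f c₀ c') (hef : EdgeDistGE K e f 4) {w u v : V}
    (hu : K.Adj w u) (hv : K.Adj w v) (hcu : c s(w, u) ≠ c₀ s(w, u))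
    (hcv : c' s(w, v) ≠ c₀ s(w, v)) : c s(w, u) ≠ c' s(w, v) := by
  have hwf : ¬ NearEdge K f 1 w := fun h => hef.symm.not_nearEdge h (he.nearEdge_of_ne hu hcu).2.1
  have hwe : ¬ NearEdge K e 1 w := fun h => hef.not_nearEdge h (hf.nearEdge_of_ne hv hcv).2.1
  obtain ⟨x, hx, hcx⟩ := he.exists_eq_of_far hwe hu
  obtain ⟨y, hy, hcy⟩ := hf.exists_eq_of_far hwf hv
  intro heq
  obtain rfl : x = y := hc₀.eq_of_eq hx hy (hcx.trans (heq.trans hcy.symm))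
  -- the edge `wx` would have to be recoloured both around `e` and around `f`
  have hxe : c s(w, x) ≠ c₀ s(w, x) := by
    rw [hcx]
    exact hc hx hu (by rintro rfl; exact hcu hcx.symm)
  have hxf : c' s(w, x) ≠ c₀ s(w, x) := by
    rw [hcy]
    exact hc' hx hv (by rintro rfl; exact hcv hcy.symm)
  exact hxf (hf.apply_eq_of_nearEdge hef hx (he.nearEdge_of_ne hx hxe).1)

end IsLocalRecoloring

noncomputable def patchRecolorings (E₀ : Set (Sym2 V)) (c₀ : Sym2 V → C)
    (col : Sym2 V → Sym2 V → C) (g : Sym2 V) : C :=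
  if h : ∃ e ∈ E₀, col e g ≠ c₀ g then col h.choose g else c₀ g

variable {E₀ : Set (Sym2 V)} {c₀ : Sym2 V → C} {col : Sym2 V → Sym2 V → C}

theorem patchRecolorings_eq_base {g : Sym2 V} (h : ∀ f ∈ E₀, col f g = c₀ g) :
    patchRecolorings E₀ c₀ col g = c₀ g :=
  dif_neg fun ⟨f, hf, hne⟩ => hne (h f hf)

theorem patchRecolorings_eq {g : Sym2 V} (he : e ∈ E₀)
    (hown : ∀ f ∈ E₀, col f g ≠ c₀ g → f = e) : patchRecolorings E₀ c₀ col g = col e g := by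
  by_cases h : ∃ f ∈ E₀, col f g ≠ c₀ g
  · rw [patchRecolorings, dif_pos h, hown _ h.choose_spec.1 h.choose_spec.2]
  · push Not at h
    rw [patchRecolorings_eq_base h, h e he]

theorem eq_of_apply_ne_of_nearEdge (hdist : ∀ e ∈ E₀, ∀ f ∈ E₀, e ≠ f → EdgeDistGE K e f 4)
    (hlocal : ∀ e ∈ E₀, IsLocalRecoloring K e c₀ (col e)) (he : e ∈ E₀) (hf : f ∈ E₀)
    {u v : V} (huv : K.Adj u v) (hch : col f s(u, v) ≠ c₀ s(u, v))
    (hnear : NearEdge K e 1 u ∨ NearEdge K e 1 v) : f = e :=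
  not_not.mp fun hfe =>
    hch ((hlocal f hf).apply_eq_of_nearEdge (hdist e he f hf (Ne.symm hfe)) huv hnear)

theorem eq_of_apply_ne_of_apply_ne (hdist : ∀ e ∈ E₀, ∀ f ∈ E₀, e ≠ f → EdgeDistGE K e f 4)
    (hlocal : ∀ e ∈ E₀, IsLocalRecoloring K e c₀ (col e)) (he : e ∈ E₀) (hf : f ∈ E₀)
    {u v : V} (huv : K.Adj u v) (hche : col e s(u, v) ≠ c₀ s(u, v))
    (hchf : col f s(u, v) ≠ c₀ s(u, v)) : f = e :=
  eq_of_apply_ne_of_nearEdge hdist hlocal he hf huv hchf ((hlocal e he).nearEdge_of_ne huv hche).1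

theorem patchRecolorings_apply_self (hdist : ∀ e ∈ E₀, ∀ f ∈ E₀, e ≠ f → EdgeDistGE K e f 4)
    (hlocal : ∀ e ∈ E₀, IsLocalRecoloring K e c₀ (col e)) (hE₀ : E₀ ⊆ K.edgeSet) (he : e ∈ E₀) :
    patchRecolorings E₀ c₀ col e = col e e := by
  induction e using Sym2.ind with
  | h u v =>
    exact patchRecolorings_eq he fun f hf h => eq_of_apply_ne_of_nearEdge hdist hlocal he hf
      (hE₀ he) h (Or.inl (nearEdge_of_mem (Sym2.mem_mk_left u v) 1))

theorem IsProperEdgeColorMap.patchRecolorings (hc₀ : IsProperEdgeColorMap K c₀)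
    (hdist : ∀ e ∈ E₀, ∀ f ∈ E₀, e ≠ f → EdgeDistGE K e f 4)
    (hlocal : ∀ e ∈ E₀, IsLocalRecoloring K e c₀ (col e))
    (hcol : ∀ e ∈ E₀, IsProperEdgeColorMap K (col e)) :
    IsProperEdgeColorMap K (patchRecolorings E₀ c₀ col) := by
  intro w u v hu hv huv
  by_cases hwu : ∃ e ∈ E₀, col e s(w, u) ≠ c₀ s(w, u)
  · obtain ⟨e, he, hwu⟩ := hwu
    rw [patchRecolorings_eq he fun f hf => eq_of_apply_ne_of_apply_ne hdist hlocal he hf hu hwu]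
    by_cases hwv : ∃ f ∈ E₀, f ≠ e ∧ col f s(w, v) ≠ c₀ s(w, v)
    · obtain ⟨f, hf, hfe, hwv⟩ := hwv
      rw [patchRecolorings_eq hf fun f' hf' =>
        eq_of_apply_ne_of_apply_ne hdist hlocal hf hf' hv hwv]
      exact (hlocal e he).ne_of_ne hc₀ (hcol e he) (hcol f hf) (hlocal f hf)
        (hdist e he f hf (Ne.symm hfe)) hu hv hwu hwv
    · push Not at hwv
      rw [patchRecolorings_eq he fun f hf h => not_not.mp fun hfe => h (hwv f hf hfe)]
      exact hcol e he hu hv huv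
  · push Not at hwu
    by_cases hwv : ∃ f ∈ E₀, col f s(w, v) ≠ c₀ s(w, v)
    · obtain ⟨f, hf, hwv⟩ := hwv
      rw [patchRecolorings_eq hf fun f' hf' =>
          eq_of_apply_ne_of_apply_ne hdist hlocal hf hf' hv hwv,
        patchRecolorings_eq hf fun f' hf' h => absurd (hwu f' hf') h]
      exact hcol f hf hu hv huv
    · push Not at hwv
      rw [patchRecolorings_eq_base hwu, patchRecolorings_eq_base hwv]
      exact hc₀ hu hv huv

end LocalRecoloring

section Kempe

variable {V C : Type*} {K : SimpleGraph V} {c : Sym2 V → C} {S : Set V} {x y : C}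

def IsKempeClosed (K : SimpleGraph V) (c : Sym2 V → C) (x y : C) (S : Set V) : Prop :=
  ∀ ⦃u v⦄, u ∈ S → K.Adj u v → c s(u, v) = x ∨ c s(u, v) = y → v ∈ S

variable [DecidableEq C]

noncomputable def kempeSwap (c : Sym2 V → C) (S : Set V) (x y : C) (g : Sym2 V) : C :=
  if g ∈ S.sym2 then Equiv.swap x y (c g) else c g

theorem kempeSwap_of_mem {u v : V} (hu : u ∈ S) (hv : v ∈ S) :
    kempeSwap c S x y s(u, v) = Equiv.swap x y (c s(u, v)) :=
  if_pos ⟨hu, hv⟩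

theorem kempeSwap_of_not_mem {u v : V} (h : ¬ (u ∈ S ∧ v ∈ S)) :
    kempeSwap c S x y s(u, v) = c s(u, v) :=
  if_neg h

theorem IsKempeClosed.kempeSwap_eq (hS : IsKempeClosed K c x y S) {u v : V} (hu : u ∈ S)
    (huv : K.Adj u v) : kempeSwap c S x y s(u, v) = Equiv.swap x y (c s(u, v)) := by
  by_cases hv : v ∈ S
  · exact kempeSwap_of_mem hu hv
  · obtain ⟨hx, hy⟩ := not_or.mp (mt (hS hu huv) hv)
    rw [kempeSwap_of_not_mem (fun h => hv h.2), Equiv.swap_apply_of_ne_of_ne hx hy]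

theorem IsProperEdgeColorMap.kempeSwap (hc : IsProperEdgeColorMap K c)
    (hS : IsKempeClosed K c x y S) : IsProperEdgeColorMap K (kempeSwap c S x y) := by
  intro w u v hu hv huv
  by_cases hw : w ∈ S
  · rw [hS.kempeSwap_eq hw hu, hS.kempeSwap_eq hw hv]
    exact (Equiv.injective _).ne (hc hu hv huv)
  · rw [kempeSwap_of_not_mem (fun h => hw h.1), kempeSwap_of_not_mem (fun h => hw h.1)]
    exact hc hu hv huv

theorem IsKempeClosed.kempeSwap {z : C} {S' : Set V} (hS : IsKempeClosed K c x z S)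
    (hS' : IsKempeClosed K c y z S') (hSS' : S ⊆ S') (hxy : x ≠ y) (hxz : x ≠ z) :
    IsKempeClosed K (kempeSwap c S' y z) x y S := by
  intro u v hu huv hc
  by_cases hv : v ∈ S'
  · rw [kempeSwap_of_mem (hSS' hu) hv, Equiv.swap_apply_eq_iff, Equiv.swap_apply_eq_iff,
      Equiv.swap_apply_of_ne_of_ne hxy hxz, Equiv.swap_apply_left] at hc
    exact hS hu huv hc
  · rw [kempeSwap_of_not_mem (fun h => hv h.2)] at hc
    exact hc.elim (fun h => hS hu huv (Or.inl h))
      (fun h => absurd (hS' (hSS' hu) huv (Or.inl h)) hv)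

theorem isLocalRecoloring_kempeSwap {e : Sym2 V} (hnear₂ : ∀ u ∈ S, NearEdge K e 2 u)
    (hnear₁ : ∀ ⦃u v⦄, u ∈ S → v ∈ S → K.Adj u v → c s(u, v) = x ∨ c s(u, v) = y →
      NearEdge K e 1 u ∨ NearEdge K e 1 v)
    (hfar : ∀ u ∈ S, ¬ NearEdge K e 1 u →
      (∃ w, K.Adj u w ∧ c s(u, w) = x) ∧ ∃ w, K.Adj u w ∧ c s(u, w) = y) :
    IsLocalRecoloring K e c (kempeSwap c S x y) where
  nearEdge_of_ne u v huv hne := by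
    by_cases hS : u ∈ S ∧ v ∈ S
    · rw [kempeSwap_of_mem hS.1 hS.2] at hne
      have hxy : c s(u, v) = x ∨ c s(u, v) = y := by
        by_contra! h
        exact hne (Equiv.swap_apply_of_ne_of_ne h.1 h.2)
      exact ⟨hnear₁ hS.1 hS.2 huv hxy, hnear₂ u hS.1, hnear₂ v hS.2⟩
    · exact absurd (kempeSwap_of_not_mem hS) hne
  exists_eq_of_far u v hu huv := by
    by_cases hS : u ∈ S ∧ v ∈ S
    · rw [kempeSwap_of_mem hS.1 hS.2]
      obtain ⟨⟨wx, hwx, hcx⟩, ⟨wy, hwy, hcy⟩⟩ := hfar u hS.1 hu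
      by_cases hx : c s(u, v) = x
      · exact ⟨wy, hwy, by rw [hx, Equiv.swap_apply_left, hcy]⟩
      by_cases hy : c s(u, v) = y
      · exact ⟨wx, hwx, by rw [hy, Equiv.swap_apply_right, hcx]⟩
      exact ⟨v, huv, (Equiv.swap_apply_of_ne_of_ne hx hy).symm⟩
    · exact ⟨v, huv, (kempeSwap_of_not_mem hS).symm⟩

theorem isLocalRecoloring_kempeSwap_of_nearEdge {e : Sym2 V} (hS : ∀ u ∈ S, NearEdge K e 1 u) :
    IsLocalRecoloring K e c (kempeSwap c S x y) :=
  isLocalRecoloring_kempeSwap (fun u hu => (hS u hu).mono one_le_two)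
    (fun u _ hu _ _ _ => Or.inl (hS u hu)) (fun u hu h => absurd (hS u hu) h)

end Kempe

section ColorNbhd

variable {V C : Type*} {K : SimpleGraph V} {c : Sym2 V → C} {z : C} {S₀ : Set V}

def closedColorNbhd (K : SimpleGraph V) (c : Sym2 V → C) (z : C) (S₀ : Set V) : Set V :=
  {v | v ∈ S₀ ∨ ∃ u ∈ S₀, K.Adj u v ∧ c s(u, v) = z}

theorem exists_eq_or_adj_of_mem_closedColorNbhd {v : V} (hv : v ∈ closedColorNbhd K c z S₀) :
    ∃ u ∈ S₀, u = v ∨ K.Adj u v := by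
  rcases hv with hv | ⟨u, hu, huv, -⟩
  exacts [⟨v, hv, Or.inl rfl⟩, ⟨u, hu, Or.inr huv⟩]

theorem mem_or_mem_of_mem_closedColorNbhd (hc : IsProperEdgeColorMap K c) {u v : V}
    (hu : u ∈ closedColorNbhd K c z S₀) (huv : K.Adj u v) (hz : c s(u, v) = z) :
    u ∈ S₀ ∨ v ∈ S₀ := by
  rcases hu with hu | ⟨u₀, hu₀, hu₀u, hcu⟩
  · exact Or.inl hu
  · rw [hc.eq_of_eq huv hu₀u.symm (by rw [hz, Sym2.eq_swap, hcu])]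
    exact Or.inr hu₀

theorem isKempeClosed_closedColorNbhd (hc : IsProperEdgeColorMap K c) (z : C) (S₀ : Set V) :
    IsKempeClosed K c z z (closedColorNbhd K c z S₀) := by
  intro u v hu huv hz
  have hz : c s(u, v) = z := hz.elim id id
  rcases mem_or_mem_of_mem_closedColorNbhd hc hu huv hz with hu₀ | hv₀
  · exact Or.inr ⟨u, hu₀, huv, hz⟩
  · exact Or.inl hv₀

theorem isKempeClosed_pair (hc : IsProperEdgeColorMap K c) {a a' : V} (h : K.Adj a a') :
    IsKempeClosed K c (c s(a, a')) (c s(a, a')) {a, a'} := by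
  rintro u v (rfl | rfl) huv hz <;> have hz := hz.elim id id
  · exact Or.inr (hc.eq_of_eq huv h hz)
  · exact Or.inl (hc.eq_of_eq huv h.symm (by rw [hz, Sym2.eq_swap]))

end ColorNbhd

section BoxProd

variable {α β FG FH : Type*} {G : SimpleGraph α} {H : SimpleGraph β}
  {cG : Sym2 α → FG} {cH : Sym2 β → FH} {a a' : α} {b : β}

/-- `g.map Prod.snd` is diagonal exactly when `g` is a copy of an edge of `G`. -/
noncomputable def boxProdEdgeColoring (cG : Sym2 α → FG) (cH : Sym2 β → FH)
    (g : Sym2 (α × β)) : FG ⊕ FH :=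
  if (g.map Prod.snd).IsDiag then .inl (cG (g.map Prod.fst)) else .inr (cH (g.map Prod.snd))

theorem boxProdEdgeColoring_mk (u v : α × β) :
    boxProdEdgeColoring cG cH s(u, v) =
      if u.2 = v.2 then .inl (cG s(u.1, v.1)) else .inr (cH s(u.2, v.2)) := by
  simp [boxProdEdgeColoring]

theorem boxProdEdgeColoring_eq_inl {u v : α × β} {x : FG} (huv : (G □ H).Adj u v)
    (h : boxProdEdgeColoring cG cH s(u, v) = .inl x) :
    G.Adj u.1 v.1 ∧ u.2 = v.2 ∧ cG s(u.1, v.1) = x := by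
  rw [boxProdEdgeColoring_mk] at h
  rcases boxProd_adj.mp huv with ⟨h1, h2⟩ | ⟨h2, -⟩
  · simp_all
  · simp [h2.ne] at h

theorem boxProdEdgeColoring_eq_inr {u v : α × β} {y : FH} (huv : (G □ H).Adj u v)
    (h : boxProdEdgeColoring cG cH s(u, v) = .inr y) :
    H.Adj u.2 v.2 ∧ u.1 = v.1 ∧ cH s(u.2, v.2) = y := by
  rw [boxProdEdgeColoring_mk] at h
  rcases boxProd_adj.mp huv with ⟨-, h2⟩ | ⟨h2, h1⟩
  · simp [h2] at h
  · simp_all [h2.ne]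

theorem boxProdEdgeColoring_swap {u v : α × β} (huv : (G □ H).Adj u v) :
    boxProdEdgeColoring cG cH s(u, v) = (boxProdEdgeColoring cH cG s(u.swap, v.swap)).swap := by
  rcases boxProd_adj.mp huv with ⟨h1, h2⟩ | ⟨h2, h1⟩
  · simp [boxProdEdgeColoring_mk, h1.ne, h2]
  · simp [boxProdEdgeColoring_mk, h1, h2.ne]

theorem IsProperEdgeColorMap.boxProd (hcG : IsProperEdgeColorMap G cG)
    (hcH : IsProperEdgeColorMap H cH) :
    IsProperEdgeColorMap (G □ H) (boxProdEdgeColoring cG cH) := by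
  rintro ⟨w₁, w₂⟩ ⟨u₁, u₂⟩ ⟨v₁, v₂⟩ hu hv huv
  rcases boxProd_adj.mp hu with ⟨hu, rfl⟩ | ⟨hu, rfl⟩ <;>
    rcases boxProd_adj.mp hv with ⟨hv, rfl⟩ | ⟨hv, rfl⟩ <;>
    simp only [boxProdEdgeColoring_mk, hu.ne, hv.ne, if_true, if_false, ne_eq, Sum.inl.injEq,
      Sum.inr.injEq, reduceCtorEq, not_false_eq_true]
  · exact hcG hu hv fun h => huv (by rw [h])
  · exact hcH hu hv fun h => huv (by rw [h])

theorem IsKempeClosed.boxProd {x : FG} {y : FH} {A : Set α} {B : Set β}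
    (hA : IsKempeClosed G cG x x A) (hB : IsKempeClosed H cH y y B) :
    IsKempeClosed (G □ H) (boxProdEdgeColoring cG cH) (.inl x) (.inr y) (A ×ˢ B) := by
  rintro u v ⟨hu₁, hu₂⟩ huv (hc | hc)
  · obtain ⟨h1, h2, hc⟩ := boxProdEdgeColoring_eq_inl huv hc
    exact ⟨hA hu₁ h1 (Or.inl hc), h2 ▸ hu₂⟩
  · obtain ⟨h2, h1, hc⟩ := boxProdEdgeColoring_eq_inr huv hc
    exact ⟨h1 ▸ hu₁, hB hu₂ h2 (Or.inl hc)⟩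

theorem mem_sym2_mk_prod_of_mem_pair {x : α} (hx : x ∈ ({a, a'} : Set α)) :
    (x, b) ∈ s((a, b), (a', b)) := by
  rcases hx with rfl | rfl <;> simp

theorem nearEdge_boxProd_of_mem_pair {h : FH} {x : α} {y : β} (hx : x ∈ ({a, a'} : Set α))
    (hy : y ∈ closedColorNbhd H cH h {b}) : NearEdge (G □ H) s((a, b), (a', b)) 1 (x, y) := by
  obtain ⟨_, rfl, rfl | hy⟩ := exists_eq_or_adj_of_mem_closedColorNbhd hy
  · exact nearEdge_of_mem (mem_sym2_mk_prod_of_mem_pair hx) 1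
  · exact (nearEdge_of_mem (mem_sym2_mk_prod_of_mem_pair hx) 0).of_adj (boxProd_adj_right.mpr hy)

theorem nearEdge_boxProd_of_mem_closedColorNbhd {t : FG} {x : α}
    (hx : x ∈ closedColorNbhd G cG t {a, a'}) : NearEdge (G □ H) s((a, b), (a', b)) 1 (x, b) := by
  obtain ⟨x₀, hx₀, rfl | hx⟩ := exists_eq_or_adj_of_mem_closedColorNbhd hx
  · exact nearEdge_of_mem (mem_sym2_mk_prod_of_mem_pair hx₀) 1
  · exact (nearEdge_of_mem (mem_sym2_mk_prod_of_mem_pair hx₀) 0).of_adj (boxProd_adj_left.mpr hx)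

end BoxProd

section BoxProdRecoloring

variable {α β FG FH : Type*} {G : SimpleGraph α} {H : SimpleGraph β}
  {cG : Sym2 α → FG} {cH : Sym2 β → FH} {a a' : α} {b : β}

theorem isLocalRecoloring_kempeSwap_closedColorNbhd (hcG : IsProperEdgeColorMap G cG)
    (hcH : IsProperEdgeColorMap H cH) (t : FG) (h : FH) :
    IsLocalRecoloring (G □ H) s((a, b), (a', b)) (boxProdEdgeColoring cG cH)
      (kempeSwap (boxProdEdgeColoring cG cH)
        (closedColorNbhd G cG t {a, a'} ×ˢ closedColorNbhd H cH h {b}) (.inl t) (.inr h)) := by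
  apply isLocalRecoloring_kempeSwap
  · rintro ⟨x, y⟩ ⟨hx, hy⟩
    have hxb := nearEdge_boxProd_of_mem_closedColorNbhd (H := H) (b := b) hx
    obtain ⟨_, rfl, rfl | hy⟩ := exists_eq_or_adj_of_mem_closedColorNbhd hy
    exacts [hxb.mono one_le_two, hxb.of_adj (boxProd_adj_right.mpr hy)]
  · rintro ⟨x, y⟩ ⟨x', y'⟩ ⟨hx, hy⟩ ⟨hx', hy'⟩ huv (hc | hc)
    · obtain ⟨h1, -, hc⟩ := boxProdEdgeColoring_eq_inl huv hc
      rcases mem_or_mem_of_mem_closedColorNbhd hcG hx h1 hc with hx₀ | hx₀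
      · exact Or.inl (nearEdge_boxProd_of_mem_pair hx₀ hy)
      · exact Or.inr (nearEdge_boxProd_of_mem_pair hx₀ hy')
    · obtain ⟨h2, -, hc⟩ := boxProdEdgeColoring_eq_inr huv hc
      rcases mem_or_mem_of_mem_closedColorNbhd hcH hy h2 hc with rfl | rfl
      · exact Or.inl (nearEdge_boxProd_of_mem_closedColorNbhd hx)
      · exact Or.inr (nearEdge_boxProd_of_mem_closedColorNbhd hx')
  · -- a vertex far from `e` has a `t`-edge into `{a, a'}` and an `h`-edge into row `b`
    rintro ⟨x, y⟩ ⟨hx, hy⟩ hfar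
    constructor
    · rcases hx with hx | ⟨x₀, -, hx₀, hc⟩
      · exact absurd (nearEdge_boxProd_of_mem_pair hx hy) hfar
      · refine ⟨(x₀, y), boxProd_adj_left.mpr hx₀.symm, ?_⟩
        rw [boxProdEdgeColoring_mk, if_pos rfl, Sym2.eq_swap]
        exact congrArg Sum.inl hc
    · rcases hy with rfl | ⟨b', hb', hy₀, hc⟩
      · exact absurd (nearEdge_boxProd_of_mem_closedColorNbhd hx) hfar
      · rw [Set.mem_singleton_iff] at hb'
        rw [hb'] at hy₀ hc
        refine ⟨(x, b), boxProd_adj_right.mpr hy₀.symm, ?_⟩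
        rw [boxProdEdgeColoring_mk, if_neg hy₀.ne', Sym2.eq_swap]
        exact congrArg Sum.inr hc

theorem exists_isLocalRecoloring_inr (hcG : IsProperEdgeColorMap G cG)
    (hcH : IsProperEdgeColorMap H cH) (hG : G.Adj a a') (h : FH) :
    ∃ c, IsProperEdgeColorMap (G □ H) c ∧ c s((a, b), (a', b)) = .inr h ∧
      IsLocalRecoloring (G □ H) s((a, b), (a', b)) (boxProdEdgeColoring cG cH) c := by
  set S := ({a, a'} : Set α) ×ˢ closedColorNbhd H cH h {b}
  have hS : IsKempeClosed (G □ H) (boxProdEdgeColoring cG cH) (.inl (cG s(a, a'))) (.inr h) S :=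
    (isKempeClosed_pair hcG hG).boxProd (isKempeClosed_closedColorNbhd hcH h {b})
  refine ⟨kempeSwap (boxProdEdgeColoring cG cH) S (.inl (cG s(a, a'))) (.inr h),
    (hcG.boxProd hcH).kempeSwap hS, ?_, isLocalRecoloring_kempeSwap_of_nearEdge ?_⟩
  · rw [kempeSwap_of_mem (S := S) (u := (a, b)) (v := (a', b)) ⟨Or.inl rfl, Or.inl rfl⟩
      ⟨Or.inr rfl, Or.inl rfl⟩, boxProdEdgeColoring_mk, if_pos rfl, Equiv.swap_apply_left]
  · rintro ⟨x, y⟩ ⟨hx, hy⟩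
    exact nearEdge_boxProd_of_mem_pair hx hy

/-- First exchange `t` with an arbitrary `H`-colour `h` on `A ×ˢ B`; afterwards the edges of
colour `t` or `cG s(a, a')` at `{a, a'} ×ˢ B` stay inside it, so these two colours can be
exchanged there. -/
theorem exists_isLocalRecoloring_inl (hcG : IsProperEdgeColorMap G cG)
    (hcH : IsProperEdgeColorMap H cH) (hG : G.Adj a a') (h : FH) {t : FG}
    (ht : t ≠ cG s(a, a')) :
    ∃ c, IsProperEdgeColorMap (G □ H) c ∧ c s((a, b), (a', b)) = .inl t ∧
      IsLocalRecoloring (G □ H) s((a, b), (a', b)) (boxProdEdgeColoring cG cH) c := by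
  set c₀ := boxProdEdgeColoring cG cH
  set A := closedColorNbhd G cG t {a, a'}
  set B := closedColorNbhd H cH h {b}
  have hA₀ : ({a, a'} : Set α) ×ˢ B ⊆ A ×ˢ B := Set.prod_mono (fun _ => Or.inl) le_rfl
  have hS₁ : IsKempeClosed (G □ H) c₀ (.inl t) (.inr h) (A ×ˢ B) :=
    (isKempeClosed_closedColorNbhd hcG t _).boxProd (isKempeClosed_closedColorNbhd hcH h {b})
  have hS₂ : IsKempeClosed (G □ H) c₀ (.inl (cG s(a, a'))) (.inr h) (({a, a'} : Set α) ×ˢ B) :=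
    (isKempeClosed_pair hcG hG).boxProd (isKempeClosed_closedColorNbhd hcH h {b})
  have hst : (Sum.inl (cG s(a, a')) : FG ⊕ FH) ≠ .inl t := by simpa using ht.symm
  set c₁ := kempeSwap c₀ (A ×ˢ B) (.inl t) (.inr h)
  have hab : (a, b) ∈ ({a, a'} : Set α) ×ˢ B := ⟨Or.inl rfl, Or.inl rfl⟩
  have ha'b : (a', b) ∈ ({a, a'} : Set α) ×ˢ B := ⟨Or.inr rfl, Or.inl rfl⟩
  refine ⟨kempeSwap c₁ (({a, a'} : Set α) ×ˢ B) (.inl (cG s(a, a'))) (.inl t),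
    ((hcG.boxProd hcH).kempeSwap hS₁).kempeSwap (hS₂.kempeSwap hS₁ hA₀ hst Sum.inl_ne_inr), ?_,
    (isLocalRecoloring_kempeSwap_closedColorNbhd hcG hcH t h).trans
      (isLocalRecoloring_kempeSwap_of_nearEdge ?_)⟩
  · rw [kempeSwap_of_mem hab ha'b]
    dsimp only [c₁, c₀]
    rw [kempeSwap_of_mem (hA₀ hab) (hA₀ ha'b), boxProdEdgeColoring_mk, if_pos rfl]
    exact (congrArg _ (Equiv.swap_apply_of_ne_of_ne hst Sum.inl_ne_inr)).trans
      (Equiv.swap_apply_left _ _)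
  · rintro ⟨x, y⟩ ⟨hx, hy⟩
    exact nearEdge_boxProd_of_mem_pair hx hy

theorem exists_isLocalRecoloring_of_adj_left [Nonempty FH] (hcG : IsProperEdgeColorMap G cG)
    (hcH : IsProperEdgeColorMap H cH) (hG : G.Adj a a') (t : FG ⊕ FH) :
    ∃ c, IsProperEdgeColorMap (G □ H) c ∧ c s((a, b), (a', b)) = t ∧
      IsLocalRecoloring (G □ H) s((a, b), (a', b)) (boxProdEdgeColoring cG cH) c := by
  rcases t with t | h
  · by_cases ht : t = cG s(a, a')
    · exact ⟨_, hcG.boxProd hcH, by rw [boxProdEdgeColoring_mk, if_pos rfl, ht], .refl⟩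
    · exact exists_isLocalRecoloring_inl hcG hcH hG (Classical.arbitrary FH) ht
  · exact exists_isLocalRecoloring_inr hcG hcH hG h

theorem exists_isLocalRecoloring_boxProd [Nonempty FG] [Nonempty FH]
    (hcG : IsProperEdgeColorMap G cG) (hcH : IsProperEdgeColorMap H cH) {e : Sym2 (α × β)}
    (he : e ∈ (G □ H).edgeSet) (t : FG ⊕ FH) :
    ∃ c, IsProperEdgeColorMap (G □ H) c ∧ c e = t ∧
      IsLocalRecoloring (G □ H) e (boxProdEdgeColoring cG cH) c := by
  induction e using Sym2.ind with
  | h u v =>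
    obtain ⟨u₁, u₂⟩ := u
    obtain ⟨v₁, v₂⟩ := v
    rcases boxProd_adj.mp he with ⟨hG, rfl : u₂ = v₂⟩ | ⟨hH, rfl : u₁ = v₁⟩
    · exact exists_isLocalRecoloring_of_adj_left hcG hcH hG t
    · -- swapping the factors turns this edge into an edge of a copy of the first factor
      obtain ⟨c, hc, hct, hloc⟩ := exists_isLocalRecoloring_of_adj_left (b := u₁) hcH hcG hH t.swap
      refine ⟨Sum.swap ∘ c ∘ Sym2.map (boxProdComm G H),
        (hc.comap (boxProdComm G H)).comp Sum.swap_leftInverse.injective, by simp [hct],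
        hloc.of_iso (boxProdComm G H) fun _ _ huv => boxProdEdgeColoring_swap huv⟩

end BoxProdRecoloring

/-- A distance-4 precoloring of the Cartesian product of two Class 1
graphs with at most `Δ(G) + Δ(H)` colors is extendable. -/
theorem extend_distance4_boxProd {α β : Type*} [Fintype α] [Fintype β]
    (G : SimpleGraph α) (H : SimpleGraph β)
    (hG : IsClassOne G) (hH : IsClassOne H)
    (hGe : G.edgeSet.Nonempty) (hHe : H.edgeSet.Nonempty)
    (E₀ : Set (Sym2 (α × β)))
    (φ : Sym2 (α × β) → Fin (G.maxDegree + H.maxDegree))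
    (hφ : IsProperEdgeColoringOn (G □ H) E₀ φ)
    (hdist : ∀ e ∈ E₀, ∀ f ∈ E₀, e ≠ f → EdgeDistGE (G □ H) e f 4) :
    ∃ c : Sym2 (α × β) → Fin (G.maxDegree + H.maxDegree),
      IsProperEdgeColoring (G □ H) c ∧ ∀ e ∈ E₀, c e = φ e := by
  obtain ⟨cG, hcG⟩ := hG.exists_isProperEdgeColorMap
  obtain ⟨cH, hcH⟩ := hH.exists_isProperEdgeColorMap
  have : Nonempty (Fin G.maxDegree) := ⟨⟨0, maxDegree_pos_of_edgeSet_nonempty hGe⟩⟩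
  have : Nonempty (Fin H.maxDegree) := ⟨⟨0, maxDegree_pos_of_edgeSet_nonempty hHe⟩⟩
  choose! col hcol hcolφ hlocal using fun e (he : e ∈ E₀) =>
    exists_isLocalRecoloring_boxProd hcG hcH (hφ.1 he) (finSumFinEquiv.symm (φ e))
  refine ⟨finSumFinEquiv ∘ patchRecolorings E₀ (boxProdEdgeColoring cG cH) col,
    isProperEdgeColoring_iff_s11.mpr
      (((hcG.boxProd hcH).patchRecolorings hdist hlocal hcol).comp finSumFinEquiv.injective),
    fun e he => ?_⟩
  simp [patchRecolorings_apply_self hdist hlocal hφ.1 he, hcolφ e he]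
end

section
/- Let H be a Class 1 simple graph with at least one edge and maximum degree Δ(H). Then there exists a Δ(H)-regular simple graph H* with χ'(H*) = Δ(H) that contains H as a subgraph (i.e., there is an injective graph homomorphism from H into H*), and moreover every vertex of H* outside the image of H has at most one neighbor in the image of H. -/
open SimpleGraph
open scoped Classical

/-!
Fix a proper coloring `c` of `H` with `Δ = Δ(H)` colors and take `2^Δ` copies of `H`, indexed by
the subsets `S` of the colors. At each vertex `v` and for each color `i` missing at `v`, join the
copies of `v` in the layers `S` and `S ∆ {i}` and give that edge the color `i`. Every vertex gains
exactly `Δ - deg v` edges, one of each missing color, so the result is `Δ`-regular and properly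
`Δ`-edge-colored. A vertex outside the layer `∅` meets that layer only along edges of the fibre
over its own vertex of `H`, hence in at most one vertex.
-/

open Finset

namespace IsProperEdgeColoring

variable {V W : Type*} {G : SimpleGraph V} {n : ℕ} {c : Sym2 V → Fin n}

lemma ne_of_adj (hc : IsProperEdgeColoring G c) {v u u' : V} (hu : G.Adj v u)
    (hu' : G.Adj v u') (hne : u ≠ u') : c s(v, u) ≠ c s(v, u') :=
  hc _ (G.mem_edgeSet.2 hu) _ (G.mem_edgeSet.2 hu') (fun h => hne (Sym2.congr_right.1 h))
    ⟨v, Sym2.mem_mk_left _ _, Sym2.mem_mk_left _ _⟩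

lemma injOn_neighborFinset (hc : IsProperEdgeColoring G c) (v : V) [Fintype (G.neighborSet v)] :
    Set.InjOn (fun u => c s(v, u)) (G.neighborFinset v) := fun u hu u' hu' h => by
  by_contra hne
  exact hc.ne_of_adj ((G.mem_neighborFinset v u).1 hu) ((G.mem_neighborFinset v u').1 hu') hne h

lemma degree_le (hc : IsProperEdgeColoring G c) (v : V) [Fintype (G.neighborSet v)] :
    G.degree v ≤ n := by
  simpa using card_le_card_of_injOn _ (fun _ _ => mem_univ _) (hc.injOn_neighborFinset v)

lemma comap {G' : SimpleGraph W} (f : G' ↪g G) (hc : IsProperEdgeColoring G c) :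
    IsProperEdgeColoring G' (c ∘ Sym2.map f) := by
  rintro e he e' he' hne ⟨x, hx, hx'⟩
  exact hc _ (f.toHom.map_mem_edgeSet he) _ (f.toHom.map_mem_edgeSet he')
    (fun h => hne (Sym2.map.injective f.injective h))
    ⟨f x, Sym2.mem_map.2 ⟨x, hx, rfl⟩, Sym2.mem_map.2 ⟨x, hx', rfl⟩⟩

end IsProperEdgeColoring

lemma exists_isProperEdgeColoring_chromIndex {V : Type*} [Fintype V] (G : SimpleGraph V) :
    ∃ c : Sym2 V → Fin (chromIndex G), IsProperEdgeColoring G c := by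
  have hne : {n | ∃ c : Sym2 V → Fin n, IsProperEdgeColoring G c}.Nonempty :=
    ⟨_, Fintype.equivFin (Sym2 V),
      fun _ _ _ _ hef _ h => hef ((Fintype.equivFin _).injective h)⟩
  exact Nat.sInf_mem hne

lemma chromIndex_eq_of_isRegularOfDegree {V : Type*} [Fintype V] [Nonempty V]
    {G : SimpleGraph V} {d : ℕ} (hG : G.IsRegularOfDegree d) {c : Sym2 V → Fin d}
    (hc : IsProperEdgeColoring G c) : chromIndex G = d := by
  refine le_antisymm (Nat.sInf_le ⟨c, hc⟩) ?_
  obtain ⟨c', hc'⟩ := exists_isProperEdgeColoring_chromIndex G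
  obtain ⟨v⟩ := ‹Nonempty V›
  exact hG v ▸ hc'.degree_le v

lemma SimpleGraph.IsRegularOfDegree.of_iso {V W : Type*} [Fintype V] [Fintype W]
    {G : SimpleGraph V} {G' : SimpleGraph W} {d : ℕ} (f : G' ≃g G)
    (hG : G.IsRegularOfDegree d) : G'.IsRegularOfDegree d :=
  fun x => f.degree_eq x ▸ hG (f x)

section Regularization

variable {β : Type*} {Δ : ℕ}

noncomputable def regularizationColoring (c : Sym2 β → Fin Δ) :
    Sym2 (β × Finset (Fin Δ)) → Fin Δ :=
  Sym2.lift ⟨fun p q => if h : (symmDiff p.2 q.2).Nonempty then (symmDiff p.2 q.2).min' h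
    else c s(p.1, q.1), by
    intro p q
    simp only [symmDiff_comm p.2 q.2, Sym2.eq_swap]⟩

variable {c : Sym2 β → Fin Δ}

lemma regularizationColoring_of_snd_eq {p q : β × Finset (Fin Δ)} (h : p.2 = q.2) :
    regularizationColoring c s(p, q) = c s(p.1, q.1) := by
  simp [regularizationColoring, h]

lemma regularizationColoring_of_symmDiff_eq {p q : β × Finset (Fin Δ)} {i : Fin Δ}
    (h : symmDiff p.2 q.2 = {i}) : regularizationColoring c s(p, q) = i := by
  simp only [regularizationColoring, Sym2.lift_mk, h, singleton_nonempty, dif_pos, min'_singleton]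

variable [Fintype β] {H : SimpleGraph β}

noncomputable def missingColors (H : SimpleGraph β) (c : Sym2 β → Fin Δ) (v : β) :
    Finset (Fin Δ) :=
  univ \ (H.neighborFinset v).image fun u => c s(v, u)

lemma color_ne_of_mem_missingColors {v u : β} {i : Fin Δ} (hi : i ∈ missingColors H c v)
    (hu : H.Adj v u) : c s(v, u) ≠ i := by
  rintro rfl
  exact (mem_sdiff.1 hi).2 (mem_image_of_mem _ ((H.mem_neighborFinset v u).2 hu))

lemma card_missingColors (hc : IsProperEdgeColoring H c) (v : β) :
    #(missingColors H c v) = Δ - H.degree v := by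
  rw [missingColors, card_sdiff_of_subset (subset_univ _),
    card_image_of_injOn (hc.injOn_neighborFinset v),
    card_neighborFinset_eq_degree, card_univ, Fintype.card_fin]

def regularization (H : SimpleGraph β) (c : Sym2 β → Fin Δ) :
    SimpleGraph (β × Finset (Fin Δ)) where
  Adj p q := (H.Adj p.1 q.1 ∧ p.2 = q.2) ∨
    (p.1 = q.1 ∧ ∃ i ∈ missingColors H c p.1, symmDiff p.2 q.2 = {i})
  symm := by
    constructor
    rintro p q (⟨h, hs⟩ | ⟨h, i, hi, hs⟩)
    · exact .inl ⟨h.symm, hs.symm⟩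
    · exact .inr ⟨h.symm, i, h ▸ hi, symmDiff_comm p.2 q.2 ▸ hs⟩
  loopless := by
    constructor
    rintro p (⟨h, -⟩ | ⟨-, i, -, hs⟩)
    · exact H.loopless.irrefl _ h
    · simp at hs

lemma regularizationColoring_ne (hc : IsProperEdgeColoring H c)
    {p q q' : β × Finset (Fin Δ)} (hq : (regularization H c).Adj p q)
    (hq' : (regularization H c).Adj p q') (hne : q ≠ q') :
    regularizationColoring c s(p, q) ≠ regularizationColoring c s(p, q') := by
  rcases hq with ⟨ha, hs⟩ | ⟨h1, i, hi, hs⟩ <;>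
    rcases hq' with ⟨ha', hs'⟩ | ⟨h1', i', hi', hs'⟩
  · rw [regularizationColoring_of_snd_eq hs, regularizationColoring_of_snd_eq hs']
    exact hc.ne_of_adj ha ha' fun h => hne (Prod.ext h (hs.symm.trans hs'))
  · rw [regularizationColoring_of_snd_eq hs, regularizationColoring_of_symmDiff_eq hs']
    exact color_ne_of_mem_missingColors hi' ha
  · rw [regularizationColoring_of_symmDiff_eq hs, regularizationColoring_of_snd_eq hs']
    exact (color_ne_of_mem_missingColors hi ha').symm
  · rw [regularizationColoring_of_symmDiff_eq hs, regularizationColoring_of_symmDiff_eq hs']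
    rintro rfl
    exact hne (Prod.ext (h1.symm.trans h1') (symmDiff_right_injective p.2 (hs.trans hs'.symm)))

lemma isProperEdgeColoring_regularizationColoring (hc : IsProperEdgeColoring H c) :
    IsProperEdgeColoring (regularization H c) (regularizationColoring c) := by
  rintro e he e' he' hne ⟨p, hpe, hpe'⟩
  obtain ⟨q, rfl⟩ := Sym2.mem_iff_exists.1 hpe
  obtain ⟨q', rfl⟩ := Sym2.mem_iff_exists.1 hpe'
  exact regularizationColoring_ne hc he he' fun h => hne (h ▸ rfl)

lemma neighborFinset_regularization (v : β) (S : Finset (Fin Δ)) :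
    (regularization H c).neighborFinset (v, S) =
      (H.neighborFinset v).image (·, S) ∪
        (missingColors H c v).image fun i => (v, symmDiff S {i}) := by
  ext ⟨u, T⟩
  simp only [mem_neighborFinset, mem_union, mem_image, Prod.mk.injEq]
  constructor
  · rintro (⟨ha, rfl⟩ | ⟨rfl, i, hi, hs⟩)
    · exact .inl ⟨u, ha, rfl, rfl⟩
    · exact .inr ⟨i, hi, rfl, by rw [← hs, symmDiff_symmDiff_cancel_left]⟩
  · rintro (⟨u, ha, rfl, rfl⟩ | ⟨i, hi, rfl, rfl⟩)
    · exact .inl ⟨ha, rfl⟩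
    · exact .inr ⟨rfl, i, hi, symmDiff_symmDiff_cancel_left _ _⟩

lemma isRegularOfDegree_regularization (hc : IsProperEdgeColoring H c)
    (hdeg : ∀ v, H.degree v ≤ Δ) : (regularization H c).IsRegularOfDegree Δ := by
  rintro ⟨v, S⟩
  have hdisj : Disjoint ((H.neighborFinset v).image (·, S))
      ((missingColors H c v).image fun i => (v, symmDiff S {i})) := by
    simp only [Finset.disjoint_left, mem_image, not_exists, not_and]
    rintro _ ⟨u, hu, rfl⟩ i - h
    have : symmDiff S {i} = S := congrArg Prod.snd h
    simp at this
  rw [← card_neighborFinset_eq_degree, neighborFinset_regularization,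
    card_union_of_disjoint hdisj,
    card_image_of_injective _ fun u u' h => congrArg Prod.fst h,
    card_image_of_injective _ fun i i' h => by simpa using congrArg Prod.snd h,
    card_neighborFinset_eq_degree, card_missingColors hc]
  have := hdeg v
  omega

lemma regularization_adj_of_adj {u v : β} (h : H.Adj u v) :
    (regularization H c).Adj (u, ∅) (v, ∅) :=
  .inl ⟨h, rfl⟩

lemma fst_eq_of_regularization_adj {p : β × Finset (Fin Δ)} {u : β}
    (h : (regularization H c).Adj p (u, ∅)) (hp : p.2 ≠ ∅) : p.1 = u := by
  rcases h with ⟨-, hs⟩ | ⟨h, -⟩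
  exacts [absurd hs hp, h]

end Regularization

/-- Every Class 1 graph `H` with at least one edge embeds into a
`Δ(H)`-regular graph `H*` with `χ'(H*) = Δ(H)`, in which every vertex outside the image
of `H` has at most one neighbor inside the image of `H`. -/
theorem regularization_of_classOne {β : Type*} [Fintype β]
    (H : SimpleGraph β) (hH : IsClassOne H) (hHe : H.edgeSet.Nonempty) :
    ∃ (n : ℕ) (Hs : SimpleGraph (Fin n)) (f : β → Fin n),
      Hs.IsRegularOfDegree H.maxDegree ∧
      chromIndex Hs = H.maxDegree ∧
      Function.Injective f ∧
      (∀ u v, H.Adj u v → Hs.Adj (f u) (f v)) ∧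
      (∀ w : Fin n, w ∉ Set.range f → (Hs.neighborSet w ∩ Set.range f).Subsingleton) := by
  obtain ⟨c, hc⟩ : ∃ c : Sym2 β → Fin H.maxDegree, IsProperEdgeColoring H c :=
    hH ▸ exists_isProperEdgeColoring_chromIndex H
  obtain ⟨⟨a, -⟩, -⟩ := hHe
  set G := regularization H c
  set φ := (Fintype.equivFin (β × Finset (Fin H.maxDegree))).symm
  have : Nonempty (Fin _) := ⟨φ.symm (a, ∅)⟩
  have hreg : (G.comap φ).IsRegularOfDegree H.maxDegree :=
    (isRegularOfDegree_regularization hc H.degree_le_maxDegree).of_iso (Iso.comap φ G)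
  refine ⟨_, G.comap φ, fun v => φ.symm (v, ∅), hreg,
    chromIndex_eq_of_isRegularOfDegree hreg
      ((isProperEdgeColoring_regularizationColoring hc).comap (Iso.comap φ G).toEmbedding),
    fun u v h => congrArg Prod.fst (φ.symm.injective h),
    fun u v h => by simpa using regularization_adj_of_adj h, ?_⟩
  rintro w hw _ ⟨hwu, u, rfl⟩ _ ⟨hwv, v, rfl⟩
  have hS : (φ w).2 ≠ ∅ := fun h => hw ⟨(φ w).1, by rw [← h, Equiv.symm_apply_eq]⟩
  simp only [mem_neighborSet, comap_adj, Equiv.apply_symm_apply] at hwu hwv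
  rw [← fst_eq_of_regularization_adj hwu hS, ← fst_eq_of_regularization_adj hwv hS]
end
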